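/- arXiv:2002.03814 — 4 statements merged into one kernel-verified Lean document; each statement's English description precedes it below -/
import Mathlib

section
/- For every natural number w, there exists a polynomial P_w with rational coefficients of degree exactly 2w such that for every natural number n ≥ w, P_w(n) equals the unsigned Stirling number of the first kind [n, n−w], i.e. the coefficient of x^{n−w} in the rising factorial x(x+1)⋯(x+n−1). -/
open Polynomial Finset

lemma desc_step (d : ℕ) (x : ℚ) :
    (descPochhammer ℚ (d+1)).eval (x+1) =
      (descPochhammer ℚ (d+1)).eval x + (d+1) * (descPochhammer ℚ d).eval x := by
  have h1 : (descPochhammer ℚ (d+1)).eval (x+1) = (x+1) * (descPochhammer ℚ d).eval x := by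
    rw [descPochhammer_succ_left]
    simp [eval_comp]
  rw [h1, descPochhammer_succ_eval]
  ring

lemma sum_desc (d n : ℕ) :
    ∑ m ∈ Finset.range n, (descPochhammer ℚ d).eval (m : ℚ) =
      (descPochhammer ℚ (d+1)).eval (n : ℚ) / (d+1) := by
  induction n with
  | zero => simp [descPochhammer_ne_zero_eval_zero (R := ℚ) (Nat.succ_ne_zero d)]
  | succ n ih =>
      rw [Finset.sum_range_succ, ih, Nat.cast_succ, desc_step]
      have : ((d:ℚ)+1) ≠ 0 := by positivity
      field_simp

lemma antider : ∀ (N : ℕ) (Q : Polynomial ℚ), Q.natDegree ≤ N →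
    ∃ S : Polynomial ℚ, S.degree ≤ (Q.natDegree + 1 : ℕ) ∧
      (Q ≠ 0 → S.degree = (Q.natDegree + 1 : ℕ)) ∧
      ∀ n : ℕ, S.eval (n : ℚ) = ∑ m ∈ Finset.range n, Q.eval (m : ℚ) := by
  intro N
  induction N with
  | zero =>
      intro Q hQ
      have hc : Q = C (Q.coeff 0) := Polynomial.eq_C_of_natDegree_le_zero hQ
      by_cases h0 : Q = 0
      · exact ⟨0, by simp [h0], fun h => absurd h0 h, by simp [h0]⟩
      · have hne : Q.coeff 0 ≠ 0 := fun h => h0 (by rw [hc, h, map_zero])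
        have hd0 : Q.natDegree = 0 := Nat.le_zero.mp hQ
        have hdeg1 : (C (Q.coeff 0) * X).degree = ((Q.natDegree + 1 : ℕ) : WithBot ℕ) := by
          rw [degree_C_mul_X hne, hd0]
          rfl
        refine ⟨C (Q.coeff 0) * X, le_of_eq hdeg1, fun _ => hdeg1, ?_⟩
        intro n
        conv_rhs => rw [hc]
        simp only [eval_mul, eval_C, eval_X, Finset.sum_const, Finset.card_range,
          nsmul_eq_mul]
        rw [mul_comm]
  | succ N ih =>
      intro Q hQ
      by_cases hle : Q.natDegree ≤ N
      · exact ih Q hle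
      have hd : Q.natDegree = N + 1 := le_antisymm hQ (Nat.lt_of_not_le hle)
      have h0 : Q ≠ 0 := fun h => hle (by simp [h])
      set d := N + 1 with hdd
      set a := Q.leadingCoeff with ha
      have ha0 : a ≠ 0 := leadingCoeff_ne_zero.mpr h0
      have hmon : (descPochhammer ℚ d).Monic := monic_descPochhammer ℚ d
      have hdegD : (descPochhammer ℚ d).degree = (d : ℕ) := by
        rw [degree_eq_natDegree hmon.ne_zero, descPochhammer_natDegree]
      have hdegCa : (C a * descPochhammer ℚ d).degree = (d : ℕ) := by
        rw [degree_C_mul ha0, hdegD]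
      set R := Q - C a * descPochhammer ℚ d with hR
      have hdegR : R.degree < (d : ℕ) := by
        have hQdeg : Q.degree = (d : ℕ) := by
          rw [degree_eq_natDegree h0, hd]
        have hlc : Q.leadingCoeff = (C a * descPochhammer ℚ d).leadingCoeff := by
          rw [leadingCoeff_mul, leadingCoeff_C, hmon.leadingCoeff, mul_one]
        have := degree_sub_lt (hQdeg.trans hdegCa.symm) h0 hlc
        rwa [hQdeg] at this
      have hRnat : R.natDegree ≤ N := by
        by_cases hR0 : R = 0
        · simp [hR0]
        · have := (degree_eq_natDegree hR0) ▸ hdegR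
          exact_mod_cast Nat.lt_succ_iff.mp (by exact_mod_cast this)
      obtain ⟨T, hTle, _, hTsum⟩ := ih R hRnat
      have hca : (a / ((d : ℚ) + 1)) ≠ 0 := div_ne_zero ha0 (by positivity)
      have hdeglead : (C (a / ((d:ℚ) + 1)) * descPochhammer ℚ (d + 1)).degree
          = ((d + 1 : ℕ) : WithBot ℕ) := by
        rw [degree_C_mul hca, degree_eq_natDegree (monic_descPochhammer ℚ (d+1)).ne_zero,
          descPochhammer_natDegree]
      have hTlt : T.degree < ((d + 1 : ℕ) : WithBot ℕ) := by
        refine lt_of_le_of_lt hTle ?_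
        exact_mod_cast Nat.lt_succ_of_le (Nat.succ_le_succ hRnat)
      have hdegS : (C (a / ((d:ℚ) + 1)) * descPochhammer ℚ (d + 1) + T).degree
          = ((Q.natDegree + 1 : ℕ) : WithBot ℕ) := by
        rw [degree_add_eq_left_of_degree_lt (hdeglead ▸ hTlt), hdeglead, hd]
      refine ⟨C (a / (d + 1)) * descPochhammer ℚ (d + 1) + T, le_of_eq hdegS,
        fun _ => hdegS, ?_⟩
      · intro n
        have hQeq : ∀ m : ℕ, Q.eval (m : ℚ)
            = a * (descPochhammer ℚ d).eval (m : ℚ) + R.eval (m : ℚ) := by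
          intro m; simp [hR]
        simp only [eval_add, eval_mul, eval_C, hTsum n]
        rw [Finset.sum_congr rfl (fun m _ => hQeq m), Finset.sum_add_distrib,
          ← Finset.mul_sum, sum_desc]
        push_cast
        field_simp



/-- For every natural number `w` there is a polynomial `P ∈ ℚ[x]` of degree exactly `2w`
such that for all naturals `n ≥ w`, `P n` equals the unsigned Stirling number of the first
kind `[n, n - w]`, i.e. the coefficient of `x ^ (n - w)` in the ascending factorial
`x (x+1) ⋯ (x + n - 1)`. -/
theorem stirling_first_kind_polynomial (w : ℕ) :
    ∃ P : Polynomial ℚ, P.degree = (2 * w : ℕ) ∧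
      ∀ n : ℕ, w ≤ n → P.eval (n : ℚ) = (ascPochhammer ℚ n).coeff (n - w) := by
  induction w with
  | zero =>
      refine ⟨1, by simp, ?_⟩
      intro n _
      simp only [Nat.sub_zero, eval_one]
      have hnd := ascPochhammer_natDegree (S := ℚ) n
      have h1 := (monic_ascPochhammer ℚ n).coeff_natDegree
      rw [hnd] at h1
      rw [h1]
  | succ w ihw =>
      obtain ⟨P, hPdeg, hPval⟩ := ihw
      have hP0 : P ≠ 0 := by
        intro h
        rw [h, degree_zero] at hPdeg
        rw [Nat.cast_withBot] at hPdeg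
        exact WithBot.bot_ne_coe hPdeg
      have hPnat : P.natDegree = 2 * w := natDegree_eq_of_degree_eq_some hPdeg
      set Q : Polynomial ℚ := X * P with hQ
      have hQ0 : Q ≠ 0 := mul_ne_zero X_ne_zero hP0
      have hQnat : Q.natDegree = 2 * w + 1 := by
        rw [hQ, natDegree_mul X_ne_zero hP0, natDegree_X, hPnat, add_comm]
      obtain ⟨S, _, hSdeg', hSsum⟩ := antider Q.natDegree Q le_rfl
      have hSdeg : S.degree = (2 * w + 2 : ℕ) := by
        rw [hSdeg' hQ0, hQnat]
      set c : ℚ := (ascPochhammer ℚ (w + 1)).coeff 0 - S.eval ((w + 1 : ℕ) : ℚ) with hc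
      refine ⟨S + C c, ?_, ?_⟩
      · have hlt : (C c).degree < S.degree := by
          rw [hSdeg]
          exact lt_of_le_of_lt degree_C_le (by exact_mod_cast Nat.succ_pos (2 * w + 1))
        rw [degree_add_eq_left_of_degree_lt hlt, hSdeg]
        norm_cast
      · intro n hn
        induction n, hn using Nat.le_induction with
        | base =>
            simp only [eval_add, eval_C, hc, Nat.sub_self]
            ring
        | succ n hn ihn =>
            have hstep : S.eval ((n + 1 : ℕ) : ℚ) = S.eval (n : ℚ) + Q.eval (n : ℚ) := by
              rw [hSsum, hSsum, Finset.sum_range_succ]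
            have hQn : Q.eval (n : ℚ) = (n : ℚ) * P.eval (n : ℚ) := by
              simp [hQ]
            have hcoeff : (ascPochhammer ℚ (n + 1)).coeff (n + 1 - (w + 1)) =
                (ascPochhammer ℚ n).coeff (n - (w + 1)) +
                (ascPochhammer ℚ n).coeff (n - w) * (n : ℚ) := by
              have hsplit : ascPochhammer ℚ (n + 1) =
                  ascPochhammer ℚ n * X + ascPochhammer ℚ n * C (n : ℚ) := by
                rw [ascPochhammer_succ_right, mul_add, C_eq_natCast]
              have hj : n + 1 - (w + 1) = (n - (w + 1)) + 1 := by omega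
              have hj2 : n - w = (n - (w + 1)) + 1 := by omega
              rw [hsplit, coeff_add, hj, coeff_mul_X, coeff_mul_C, hj2]
            rw [eval_add, eval_C, hstep, hQn, hcoeff, ← ihn,
              ← hPval n (Nat.le_of_succ_le hn), eval_add, eval_C]
            ring
end

section
/- Let g ≥ 2 be an integer, let w be an integer with 0 ≤ w ≤ g−2, and let S = {c_1, ..., c_g} be a set of g distinct rational numbers. A configuration is a finite sequence S_1, S_2, ..., S_r of nonempty, pairwise disjoint subsets of S whose union is S; for such a configuration set t_i = Σ_{c ∈ S_i} c. A weighted configuration is a configuration together with an assignment of a non-negative integer weight w_i to each block S_i such that Σ_{i=1}^r w_i = w. The evaluation of a weighted configuration is (−1)^r · (1/r) · Π_{i=1}^r P_{w_i}(t_i), where P_{w_i} is the polynomial extension of the Stirling number [x, x−w_i]. Then the sum over all distinct weighted configurations of their evaluations is zero. -/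
/-- A *weighted configuration* on a finite set `S` of rationals with total weight `w`:
an ordered finite sequence `blocks = S₁, …, S_r` of nonempty pairwise disjoint subsets of `S`
whose union is `S`, together with non-negative integer weights `w₁, …, w_r` (one per block)
summing to `w`. -/
structure WeightedConfig (S : Finset ℚ) (w : ℕ) where
  blocks : List (Finset ℚ)
  weights : List ℕ
  length_eq : weights.length = blocks.length
  nonempty : ∀ B ∈ blocks, B.Nonempty
  pairwiseDisjoint : blocks.Pairwise fun A B => Disjoint A B
  union_eq : blocks.foldr (· ∪ ·) ∅ = S
  weight_sum : weights.sum = w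

/-- The evaluation `(-1)^r · (1/r) · ∏_{i=1}^r P_{wᵢ}(tᵢ)` of a weighted configuration,
where `tᵢ` is the sum of the elements of the block `Sᵢ` and `P_{wᵢ}` is the polynomial
extension of the Stirling number `[x, x - wᵢ]`. -/
noncomputable def WeightedConfig.evaluation {S : Finset ℚ} {w : ℕ}
    (P : ℕ → Polynomial ℚ) (c : WeightedConfig S w) : ℚ :=
  (-1) ^ c.blocks.length * (c.blocks.length : ℚ)⁻¹ *
    ((c.blocks.zip c.weights).map fun bw => (P bw.2).eval (∑ x ∈ bw.1, x)).prod

/-!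
Work in the algebra of functions `Finset ℚ → ℚ⟦q⟧` under the subset convolution
`(x ∗ y) U = ∑ T ⊆ U, x T * y (U \ T)`, and let `A s T = ∑ v, P v (t_T + s) q^v`, where `t_T` is
the sum of `T`. Since `P 0 = 1` and `P (v + 1)` vanishes at `0`, `A 0 ∅ = 1`, so `A 0` has a
convolution inverse `g`, a signed sum over ordered partitions. Rotating ordered partitions turns
the factor `1 / r` into the condition that the first block contains a fixed `c ∈ S`; as
`A 0 (insert c T) = A c T`, the sum of all evaluations becomes `-[q^w] R c (S \ {c})` with
`R s = A s ∗ g`.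

The Stirling recurrence gives `A (s + 1) T = (1 + q (t_T + s)) A s T`, and the Leibniz rule for
`x ↦ (U ↦ t_U x U)` turns it into a recurrence expressing `R (s + 1) U` through `R s` and the
series `R c` on smaller sets. Induction on `U`, and then on `s ∈ ℕ`, shows that `q ^ |U|` divides
`R s U`; the coefficients of `R s U` are polynomial in `s`, so this holds for every rational `s`.
For `U = S \ {c}` we have `|U| = g - 1 > w`.
-/

open Finset PowerSeries

section OrderedPartitions

variable {α : Type*} [DecidableEq α]

theorem List.mem_foldr_union {a : α} {L : List (Finset α)} :
    a ∈ L.foldr (· ∪ ·) ∅ ↔ ∃ B ∈ L, a ∈ B := by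
  induction L with
  | nil => simp
  | cons B L ih => simp [ih]

theorem List.Perm.foldr_union_eq {L₁ L₂ : List (Finset α)} (h : L₁.Perm L₂) :
    L₁.foldr (· ∪ ·) ∅ = L₂.foldr (· ∪ ·) ∅ := by
  ext a
  simp only [List.mem_foldr_union, h.mem_iff]

def orderedPartitions (U : Finset α) : Finset (List (Finset α)) :=
  if U = ∅ then {[]}
  else (U.powerset.erase ∅).attach.biUnion fun T =>
    (orderedPartitions (U \ T.1)).image (T.1 :: ·)
termination_by U.card
decreasing_by
  obtain ⟨hT, hTU⟩ := Finset.mem_erase.1 T.2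
  exact card_lt_card (sdiff_ssubset (mem_powerset.1 hTU) (nonempty_iff_ne_empty.2 hT))

theorem orderedPartitions_empty : orderedPartitions (∅ : Finset α) = {[]} := by
  rw [orderedPartitions, if_pos rfl]

theorem sum_orderedPartitions {M : Type*} [AddCommMonoid M] {U : Finset α} (hU : U ≠ ∅)
    (φ : List (Finset α) → M) :
    ∑ L ∈ orderedPartitions U, φ L =
      ∑ T ∈ U.powerset.erase ∅, ∑ L ∈ orderedPartitions (U \ T), φ (T :: L) := by
  rw [orderedPartitions, if_neg hU, sum_biUnion, ← sum_attach (U.powerset.erase ∅)]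
  · refine sum_congr rfl fun T _ => sum_image fun _ _ _ _ h => List.cons_injective h
  · intro T₁ _ T₂ _ hne
    refine disjoint_left.2 fun L h₁ h₂ => hne ?_
    obtain ⟨L₁, -, rfl⟩ := mem_image.1 h₁
    obtain ⟨L₂, -, h⟩ := mem_image.1 h₂
    exact Subtype.ext (List.cons_eq_cons.1 h).1.symm

theorem mem_orderedPartitions {U : Finset α} {L : List (Finset α)} :
    L ∈ orderedPartitions U ↔
      (∀ B ∈ L, B.Nonempty) ∧ L.Pairwise Disjoint ∧ L.foldr (· ∪ ·) ∅ = U := by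
  induction L generalizing U with
  | nil =>
    rw [orderedPartitions]
    split_ifs with hU <;> simp [eq_comm, hU]
  | cons T L ih =>
    by_cases hU : U = ∅
    · subst hU
      rw [orderedPartitions_empty, mem_singleton, List.foldr_cons]
      simp only [reduceCtorEq, false_iff, not_and]
      intro hne _ h
      exact (hne T List.mem_cons_self).ne_empty (union_eq_empty.1 h).1
    rw [orderedPartitions, if_neg hU]
    simp only [mem_biUnion, mem_attach, true_and, mem_image, Subtype.exists, mem_erase,
      mem_powerset, List.cons_eq_cons, List.mem_cons, List.pairwise_cons, List.foldr_cons,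
      forall_eq_or_imp]
    constructor
    · rintro ⟨T, ⟨hT, hTU⟩, L, hL, rfl, rfl⟩
      obtain ⟨hne, hdisj, hunion⟩ := ih.1 hL
      refine ⟨⟨nonempty_iff_ne_empty.2 hT, hne⟩, ⟨fun B hB => ?_, hdisj⟩, ?_⟩
      · have hB : B ⊆ U \ T := hunion ▸ fun a ha => List.mem_foldr_union.2 ⟨B, hB, ha⟩
        exact disjoint_of_subset_right hB disjoint_sdiff
      · rw [hunion, union_sdiff_of_subset hTU]
    · rintro ⟨⟨hT, hne⟩, ⟨hTL, hdisj⟩, hunion⟩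
      have hTrest : Disjoint T (L.foldr (· ∪ ·) ∅) := by
        refine disjoint_left.2 fun a haT ha => ?_
        obtain ⟨B, hB, haB⟩ := List.mem_foldr_union.1 ha
        exact disjoint_left.1 (hTL B hB) haT haB
      refine ⟨T, ⟨nonempty_iff_ne_empty.1 hT, hunion ▸ subset_union_left⟩, L,
        ih.2 ⟨hne, hdisj, ?_⟩, rfl, rfl⟩
      rw [← hunion, union_sdiff_cancel_left hTrest]

theorem rotate_mem_orderedPartitions {U : Finset α} {L : List (Finset α)}
    (hL : L ∈ orderedPartitions U) (n : ℕ) : L.rotate n ∈ orderedPartitions U := by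
  have hperm := L.rotate_perm n
  obtain ⟨hne, hdisj, hunion⟩ := mem_orderedPartitions.1 hL
  exact mem_orderedPartitions.2 ⟨fun B hB => hne B (hperm.mem_iff.1 hB),
    hdisj.perm hperm.symm fun h => h.symm, hperm.foldr_union_eq.trans hunion⟩

theorem List.sum_map_indicator_mem_eq_one {M : Type*} [AddCommMonoidWithOne M] {a : α}
    {L : List (Finset α)} (hdisj : L.Pairwise _root_.Disjoint) (ha : a ∈ L.foldr (· ∪ ·) ∅) :
    (L.map fun B => if a ∈ B then (1 : M) else 0).sum = 1 := by
  induction L with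
  | nil => simp at ha
  | cons B L ih =>
    rw [List.pairwise_cons] at hdisj
    rw [List.map_cons, List.sum_cons]
    by_cases haB : a ∈ B
    · rw [if_pos haB, List.sum_eq_zero, add_zero]
      simp only [List.mem_map]
      rintro _ ⟨B', hB', rfl⟩
      exact if_neg (Finset.disjoint_left.1 (hdisj.1 B' hB') haB)
    · rw [if_neg haB, zero_add]
      exact ih hdisj.2 (by simpa [haB] using ha)

end OrderedPartitions

section Rotation

variable {β : Type*}

theorem List.headI_rotate [Inhabited β] {L : List β} {j : ℕ} (hj : j < L.length) :
    (L.rotate j).headI = L[j] := by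
  have hlen : 0 < (L.rotate j).length := by rw [List.length_rotate]; omega
  obtain ⟨B, M, hBM⟩ := List.exists_cons_of_length_pos hlen
  have h := List.getElem_rotate L j 0 hlen
  simp only [hBM, List.getElem_cons_zero, List.headI_cons, zero_add, Nat.mod_eq_of_lt hj] at h ⊢
  exact h

theorem sum_sum_range_rotate {M : Type*} [AddCommMonoid M] (F : Finset (List β))
    (hF : ∀ L ∈ F, ∀ n, L.rotate n ∈ F) (φ : List β → M) :
    ∑ L ∈ F, ∑ j ∈ range L.length, φ (L.rotate j) = ∑ L ∈ F, L.length • φ L := by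
  have hconst : ∀ L ∈ F, L.length • φ L = ∑ _j ∈ range L.length, φ L := fun L _ => by
    rw [sum_const, card_range]
  rw [sum_congr rfl hconst, sum_sigma', sum_sigma']
  refine sum_nbij' (fun p => ⟨p.1.rotate p.2, p.2⟩)
    (fun p => ⟨p.1.rotate (p.1.length - p.2), p.2⟩) ?_ ?_ ?_ ?_ fun _ _ => rfl
  all_goals
    rintro ⟨L, j⟩ h
    simp only [mem_sigma, mem_range, List.length_rotate] at h ⊢
  · exact ⟨hF L h.1 j, h.2⟩
  · exact ⟨hF L h.1 _, h.2⟩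
  · rw [List.rotate_rotate, Nat.add_sub_cancel' h.2.le, List.rotate_length]
  · rw [List.rotate_rotate, Nat.sub_add_cancel h.2.le, List.rotate_length]

end Rotation

def weightLists : ℕ → ℕ → Finset (List ℕ)
  | 0, w => if w = 0 then {[]} else ∅
  | r + 1, w => (antidiagonal w).biUnion fun p => (weightLists r p.2).image (p.1 :: ·)

theorem mem_weightLists {r w : ℕ} {ws : List ℕ} :
    ws ∈ weightLists r w ↔ ws.length = r ∧ ws.sum = w := by
  induction r generalizing w ws with
  | zero =>
    rw [weightLists]
    split_ifs with hw <;> cases ws <;> simp [hw, eq_comm]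
  | succ r ih =>
    cases ws with
    | nil => simp [weightLists]
    | cons n ws => simp [weightLists, ih, eq_comm, and_comm]

theorem sum_weightLists_succ {M : Type*} [AddCommMonoid M] (r w : ℕ) (φ : List ℕ → M) :
    ∑ ws ∈ weightLists (r + 1) w, φ ws =
      ∑ p ∈ antidiagonal w, ∑ ws ∈ weightLists r p.2, φ (p.1 :: ws) := by
  rw [weightLists, sum_biUnion]
  · exact sum_congr rfl fun p _ => sum_image fun _ _ _ _ h => List.cons_injective h
  · intro p _ q _ hpq
    refine disjoint_left.2 fun ws hp hq => hpq ?_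
    obtain ⟨ws₁, hws₁, rfl⟩ := mem_image.1 hp
    obtain ⟨ws₂, hws₂, h⟩ := mem_image.1 hq
    obtain ⟨h₁, rfl⟩ := List.cons_eq_cons.1 h
    have h₂ := (mem_weightLists.1 hws₁).2.symm.trans (mem_weightLists.1 hws₂).2
    have hp' := mem_antidiagonal.1 ‹p ∈ _›
    have hq' := mem_antidiagonal.1 ‹q ∈ _›
    ext <;> omega

theorem PowerSeries.coeff_list_map_prod {ι R : Type*} [CommSemiring R] (f : ι → R⟦X⟧)
    (L : List ι) (w : ℕ) :
    coeff w (L.map f).prod =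
      ∑ ws ∈ weightLists L.length w, ((L.zip ws).map fun p => coeff p.2 (f p.1)).prod := by
  induction L generalizing w with
  | nil =>
    rw [List.map_nil, List.prod_nil, coeff_one, List.length_nil, weightLists]
    split_ifs <;> simp
  | cons i L ih =>
    rw [List.map_cons, List.prod_cons, coeff_mul, List.length_cons, sum_weightLists_succ]
    refine sum_congr rfl fun p _ => ?_
    rw [ih, mul_sum]
    rfl

section SubsetConvolution

variable {α R : Type*} [DecidableEq α] [CommSemiring R]

def subsetConv (x y : Finset α → R) (U : Finset α) : R :=
  ∑ T ∈ U.powerset, x T * y (U \ T)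

infixl:70 " ∗ " => subsetConv

def subsetConvUnit (U : Finset α) : R := if U = ∅ then 1 else 0

theorem subsetConv_comm (x y : Finset α → R) : x ∗ y = y ∗ x := by
  ext U
  refine sum_nbij' (U \ ·) (U \ ·) (fun T _ => ?_) (fun T _ => ?_) (fun T hT => ?_)
    (fun T hT => ?_) (fun T hT => ?_)
  all_goals simp only [mem_powerset] at *
  · exact sdiff_subset
  · exact sdiff_subset
  · exact Finset.sdiff_sdiff_eq_self hT
  · exact Finset.sdiff_sdiff_eq_self hT
  · rw [Finset.sdiff_sdiff_eq_self hT, mul_comm]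

theorem subsetConv_assoc (x y z : Finset α → R) : x ∗ y ∗ z = x ∗ (y ∗ z) := by
  ext U
  simp only [subsetConv, sum_mul, mul_sum]
  rw [sum_comm' (t' := U.powerset) (s' := fun V => U.powerset.filter (V ⊆ ·))]
  · refine sum_congr rfl fun V hV => ?_
    refine sum_nbij' (· \ V) (V ∪ ·) (fun T hT => ?_) (fun W hW => ?_) (fun T hT => ?_)
      (fun W hW => ?_) (fun T hT => ?_)
    all_goals simp only [mem_powerset, mem_filter] at *
    · exact sdiff_subset_sdiff hT.1 le_rfl
    · exact ⟨union_subset hV (hW.trans sdiff_subset), subset_union_left⟩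
    · exact union_sdiff_of_subset hT.2
    · exact union_sdiff_cancel_left (disjoint_of_subset_right hW disjoint_sdiff)
    · rw [sdiff_sdiff_sdiff_cancel_right hT.2, mul_assoc]
  · intro T V
    simp only [mem_powerset, mem_filter]
    exact ⟨fun h => ⟨h, h.2.trans h.1⟩, fun h => h.1⟩

theorem subsetConv_unit (x : Finset α → R) : x ∗ subsetConvUnit = x := by
  ext U
  rw [subsetConv, sum_eq_single_of_mem U (mem_powerset_self U)]
  · simp [subsetConvUnit]
  · intro T hT hTU
    have hne : U \ T ≠ ∅ := fun h =>
      hTU (subset_antisymm (mem_powerset.1 hT) (sdiff_eq_empty_iff_subset.1 h))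
    rw [subsetConvUnit, if_neg hne, mul_zero]

theorem add_subsetConv (x y z : Finset α → R) : (x + y) ∗ z = x ∗ z + y ∗ z := by
  ext U
  simp only [subsetConv, Pi.add_apply, add_mul, sum_add_distrib]

def weightedDeriv (f : α → R) (x : Finset α → R) (U : Finset α) : R :=
  (∑ a ∈ U, f a) * x U

theorem weightedDeriv_subsetConv (f : α → R) (x y : Finset α → R) :
    weightedDeriv f (x ∗ y) = weightedDeriv f x ∗ y + x ∗ weightedDeriv f y := by
  ext U
  simp only [weightedDeriv, subsetConv, Pi.add_apply, mul_sum, ← sum_add_distrib]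
  refine sum_congr rfl fun T hT => ?_
  rw [← sum_sdiff (mem_powerset.1 hT)]
  ring

theorem sum_powerset_filter_mem {M : Type*} [AddCommMonoid M] {U : Finset α} {c : α}
    (hc : c ∈ U) (φ : Finset α → M) :
    ∑ T ∈ U.powerset with c ∈ T, φ T = ∑ T ∈ (U.erase c).powerset, φ (insert c T) := by
  conv_lhs => rw [← insert_erase hc]
  rw [sum_filter, sum_powerset_insert (notMem_erase c U), sum_eq_zero, zero_add]
  · exact sum_congr rfl fun T _ => if_pos (mem_insert_self c T)
  · exact fun T hT => if_neg fun hcT => notMem_erase c U (mem_powerset.1 hT hcT)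

theorem weightedDeriv_subsetConv_apply (f : α → R) (x y : Finset α → R) (U : Finset α) :
    (weightedDeriv f x ∗ y) U =
      ∑ c ∈ U, f c * ∑ T ∈ (U.erase c).powerset, x (insert c T) * y (U.erase c \ T) := by
  simp only [subsetConv, weightedDeriv, sum_mul, mul_sum]
  rw [sum_comm' (t' := U) (s' := fun c => U.powerset.filter (c ∈ ·))]
  · refine sum_congr rfl fun c hc => ?_
    rw [sum_powerset_filter_mem hc]
    refine sum_congr rfl fun T _ => ?_
    rw [sdiff_insert, erase_sdiff_comm, mul_assoc]
  · intro T c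
    simp only [mem_powerset, mem_filter]
    exact ⟨fun h => ⟨h, h.1 h.2⟩, fun h => h.1⟩

end SubsetConvolution

section ConvolutionInverse

variable {α R : Type*} [DecidableEq α] [CommRing R]

def convInv (x : Finset α → R) (U : Finset α) : R :=
  ∑ L ∈ orderedPartitions U, (-1) ^ L.length * (L.map x).prod

theorem convInv_empty (x : Finset α → R) : convInv x ∅ = 1 := by
  simp [convInv, orderedPartitions_empty]

theorem sum_orderedPartitions_cons (x : Finset α → R) (T U : Finset α) :
    ∑ L ∈ orderedPartitions U, (-1) ^ (T :: L).length * ((T :: L).map x).prod =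
      -(x T * convInv x U) := by
  simp only [convInv, mul_sum, ← sum_neg_distrib, List.length_cons, List.map_cons,
    List.prod_cons, pow_succ]
  exact sum_congr rfl fun _ _ => by ring

theorem convInv_of_ne_empty (x : Finset α → R) {U : Finset α} (hU : U ≠ ∅) :
    convInv x U = -∑ T ∈ U.powerset.erase ∅, x T * convInv x (U \ T) := by
  rw [convInv, sum_orderedPartitions hU, ← sum_neg_distrib]
  exact sum_congr rfl fun T _ => sum_orderedPartitions_cons x T (U \ T)

theorem subsetConv_convInv {x : Finset α → R} (hx : x ∅ = 1) :
    x ∗ convInv x = subsetConvUnit := by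
  ext U
  by_cases hU : U = ∅
  · simp [hU, subsetConv, subsetConvUnit, hx, convInv_empty]
  · rw [subsetConv, subsetConvUnit, if_neg hU, ← add_sum_erase _ _ (empty_mem_powerset U), hx,
      sdiff_empty, one_mul, convInv_of_ne_empty x hU, neg_add_cancel]

theorem sum_orderedPartitions_filter_mem_headI (x : Finset α → R) {U : Finset α} {c : α}
    (hc : c ∈ U) :
    ∑ L ∈ orderedPartitions U with c ∈ L.headI, (-1) ^ L.length * (L.map x).prod =
      -∑ T ∈ (U.erase c).powerset, x (insert c T) * convInv x (U.erase c \ T) := by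
  have hU : U ≠ ∅ := ne_empty_of_mem hc
  rw [sum_filter, sum_orderedPartitions hU, ← sum_neg_distrib]
  have hfirst : ∀ T ∈ U.powerset.erase ∅,
      (∑ L ∈ orderedPartitions (U \ T), if c ∈ (T :: L).headI then
        (-1) ^ (T :: L).length * ((T :: L).map x).prod else 0) =
      if c ∈ T then -(x T * convInv x (U \ T)) else 0 := by
    intro T _
    split_ifs with hcT
    · rw [← sum_orderedPartitions_cons x T]
      exact sum_congr rfl fun L _ => if_pos hcT
    · exact sum_eq_zero fun L _ => if_neg hcT
  rw [sum_congr rfl hfirst, ← sum_filter, filter_erase, erase_eq_of_notMem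
    (by simp), sum_powerset_filter_mem hc]
  refine sum_congr rfl fun T _ => ?_
  rw [sdiff_insert, erase_sdiff_comm]

end ConvolutionInverse

section InverseLength

variable {α R : Type*} [DecidableEq α] [CommRing R] [Algebra ℚ R]

theorem sum_range_indicator_mem_headI_rotate {c : α} {L : List (Finset α)}
    (hdisj : L.Pairwise Disjoint) (hc : c ∈ L.foldr (· ∪ ·) ∅) :
    ∑ j ∈ range L.length, (if c ∈ (L.rotate j).headI then (1 : ℚ) else 0) = 1 := by
  rw [sum_range]
  refine .trans ?_ ((Fin.sum_univ_fun_getElem L _).trans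
    (List.sum_map_indicator_mem_eq_one hdisj hc))
  exact sum_congr rfl fun j _ => by rw [List.headI_rotate j.2]

/-- Rotating ordered partitions trades the weight `1 / r` for the condition that the first
block contains a given point `c`. -/
theorem sum_orderedPartitions_inv_length_smul (x : Finset α → R) {U : Finset α} {c : α}
    (hc : c ∈ U) :
    ∑ L ∈ orderedPartitions U, ((-1) ^ L.length * (L.length : ℚ)⁻¹) • (L.map x).prod =
      -∑ T ∈ (U.erase c).powerset, x (insert c T) * convInv x (U.erase c \ T) := by
  set f : List (Finset α) → R := fun L => ((-1) ^ L.length * (L.length : ℚ)⁻¹) • (L.map x).prod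
  have hrot : ∀ L n, f (L.rotate n) = f L := fun L n => by
    simp only [f, List.length_rotate, ((L.rotate_perm n).map x).prod_eq]
  have hspread : ∀ L ∈ orderedPartitions U,
      f L = ∑ j ∈ range L.length, if c ∈ (L.rotate j).headI then f (L.rotate j) else 0 := by
    intro L hL
    obtain ⟨-, hdisj, hunion⟩ := mem_orderedPartitions.1 hL
    rw [← one_smul ℚ (f L), ← sum_range_indicator_mem_headI_rotate hdisj (hunion ▸ hc),
      sum_smul]
    exact sum_congr rfl fun j _ => by rw [ite_smul, one_smul, zero_smul, hrot]
  have hhead : ∀ L : List (Finset α), c ∈ L.headI →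
      L.length • f L = (-1) ^ L.length * (L.map x).prod := by
    intro L hcL
    have hlen : (L.length : ℚ) ≠ 0 := by
      rcases L with _ | ⟨B, L⟩
      · exact (notMem_empty c hcL).elim
      · exact_mod_cast Nat.succ_ne_zero L.length
    rw [← Nat.cast_smul_eq_nsmul ℚ, smul_smul, mul_left_comm, mul_inv_cancel₀ hlen, mul_one,
      Algebra.smul_def]
    simp
  rw [sum_congr rfl hspread,
    sum_sum_range_rotate _ (fun L hL n => rotate_mem_orderedPartitions hL n)
      (fun L => if c ∈ L.headI then f L else 0),
    ← sum_orderedPartitions_filter_mem_headI x hc, sum_filter]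
  exact sum_congr rfl fun L _ => by split_ifs with hcL <;> simp [hhead L, hcL]

end InverseLength

theorem Polynomial.eq_of_eventually_eval_natCast_eq {R : Type*} [CommRing R] [IsDomain R]
    [CharZero R] {p q : Polynomial R}
    (h : ∀ᶠ n : ℕ in Filter.atTop, p.eval (n : R) = q.eval (n : R)) : p = q := by
  refine p.eq_of_infinite_eval_eq q (Set.Infinite.mono ?_
    ((Nat.frequently_atTop_iff_infinite.1 h.frequently).image Nat.cast_injective.injOn))
  rintro _ ⟨n, hn, rfl⟩
  exact hn

/-- `(ascPochhammer ℚ n).coeff k` is the Stirling number `[n, k]`. -/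
def ExtendsStirling (P : ℕ → Polynomial ℚ) : Prop :=
  ∀ v n : ℕ, v ≤ n → (P v).eval (n : ℚ) = (ascPochhammer ℚ n).coeff (n - v)

namespace ExtendsStirling

variable {P : ℕ → Polynomial ℚ}

theorem eq_one (hP : ExtendsStirling P) : P 0 = 1 := by
  refine Polynomial.eq_of_eventually_eval_natCast_eq (Filter.Eventually.of_forall fun n => ?_)
  rw [hP 0 n n.zero_le, Nat.sub_zero, Polynomial.eval_one]
  simpa [ascPochhammer_natDegree] using (monic_ascPochhammer ℚ n).coeff_natDegree

/-- The recurrence `[n + 1, k] = [n, k - 1] + n [n, k]`, extended to polynomials. -/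
theorem eval_add_one (hP : ExtendsStirling P) (v : ℕ) (x : ℚ) :
    (P (v + 1)).eval (x + 1) = (P (v + 1)).eval x + x * (P v).eval x := by
  suffices h : (P (v + 1)).comp (Polynomial.X + 1) = P (v + 1) + Polynomial.X * P v by
    simpa using congrArg (Polynomial.eval x) h
  refine Polynomial.eq_of_eventually_eval_natCast_eq (Filter.eventually_atTop.2 ⟨v + 1, ?_⟩)
  intro n hn
  have hsucc : n + 1 - (v + 1) = n - (v + 1) + 1 := by omega
  simp only [Polynomial.eval_comp, Polynomial.eval_add, Polynomial.eval_mul, Polynomial.eval_X,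
    Polynomial.eval_one]
  rw [← Nat.cast_add_one, hP _ _ (by omega), hP _ _ hn, hP _ _ (by omega), hsucc,
    ascPochhammer_succ_right, mul_add, Polynomial.coeff_add, Polynomial.coeff_mul_X,
    ← Polynomial.C_eq_natCast, Polynomial.coeff_mul_C, show n - (v + 1) + 1 = n - v by omega]
  ring

theorem eval_natCast_eq_zero (hP : ExtendsStirling P) (v : ℕ) :
    ∀ n ≤ v + 1, (P (v + 1)).eval (n : ℚ) = 0 := by
  induction v using Nat.strong_induction_on with
  | _ v ih =>
  have hlower : ∀ n < v + 1, (n : ℚ) * (P v).eval (n : ℚ) = 0 := by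
    intro n hn
    rcases Nat.eq_zero_or_pos n with rfl | hn0
    · rw [Nat.cast_zero, zero_mul]
    obtain ⟨u, rfl⟩ : ∃ u, v = u + 1 := ⟨v - 1, by omega⟩
    rw [ih u (by omega) n (by omega), mul_zero]
  intro n hn
  refine Nat.decreasingInduction (motive := fun m _ => (P (v + 1)).eval (m : ℚ) = 0)
    (fun m hm ih' => ?_) ?_ hn
  · have h := hP.eval_add_one v m
    rw [← Nat.cast_add_one, ih', hlower m hm] at h
    linarith
  · rw [hP _ _ le_rfl, Nat.sub_self, Polynomial.coeff_zero_eq_eval_zero,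
      ascPochhammer_eval_zero, if_neg (Nat.succ_ne_zero v)]

theorem eval_zero_succ (hP : ExtendsStirling P) (v : ℕ) : (P (v + 1)).eval 0 = 0 := by
  simpa using hP.eval_natCast_eq_zero v 0 (Nat.zero_le _)

end ExtendsStirling

section BlockSeries

variable {P : ℕ → Polynomial ℚ}

noncomputable def blockSeries (P : ℕ → Polynomial ℚ) (s : ℚ) (T : Finset ℚ) : ℚ⟦X⟧ :=
  mk fun v => (P v).eval (∑ a ∈ T, a + s)

theorem blockSeries_insert {c : ℚ} {T : Finset ℚ} (hc : c ∉ T) :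
    blockSeries P 0 (insert c T) = blockSeries P c T := by
  simp only [blockSeries, sum_insert hc, add_zero, add_comm c]

theorem ExtendsStirling.blockSeries_zero_empty (hP : ExtendsStirling P) :
    blockSeries P 0 ∅ = 1 := by
  ext (_ | v)
  · simp [blockSeries, hP.eq_one]
  · simp [blockSeries, hP.eval_zero_succ, coeff_one]

theorem ExtendsStirling.blockSeries_add_one (hP : ExtendsStirling P) (s : ℚ) (T : Finset ℚ) :
    blockSeries P (s + 1) T = (1 + X * C (∑ a ∈ T, a + s)) * blockSeries P s T := by
  ext (_ | v)
  · simp [blockSeries, hP.eq_one]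
  · rw [add_mul, one_mul, map_add, mul_assoc, coeff_succ_X_mul, coeff_C_mul]
    simp only [blockSeries, coeff_mk, ← add_assoc, hP.eval_add_one]

noncomputable def relSeries (P : ℕ → Polynomial ℚ) (s : ℚ) : Finset ℚ → ℚ⟦X⟧ :=
  blockSeries P s ∗ convInv (blockSeries P 0)

theorem ExtendsStirling.relSeries_zero (hP : ExtendsStirling P) :
    relSeries P 0 = subsetConvUnit :=
  subsetConv_convInv hP.blockSeries_zero_empty

theorem ExtendsStirling.relSeries_subsetConv_blockSeries (hP : ExtendsStirling P) (s : ℚ) :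
    relSeries P s ∗ blockSeries P 0 = blockSeries P s := by
  rw [relSeries, subsetConv_assoc, subsetConv_comm (convInv _), subsetConv_convInv
    hP.blockSeries_zero_empty, subsetConv_unit]

theorem relSeries_erase_eq_sum_insert (c : ℚ) (U : Finset ℚ) :
    relSeries P c (U.erase c) = ∑ T ∈ (U.erase c).powerset,
      blockSeries P 0 (insert c T) * convInv (blockSeries P 0) (U.erase c \ T) :=
  sum_congr rfl fun T hT => by
    rw [blockSeries_insert fun hcT => notMem_erase c U (mem_powerset.1 hT hcT)]

theorem weightedDeriv_blockSeries_subsetConv_apply (U : Finset ℚ) :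
    (weightedDeriv C (blockSeries P 0) ∗ convInv (blockSeries P 0)) U =
      ∑ c ∈ U, C c * relSeries P c (U.erase c) := by
  simp only [weightedDeriv_subsetConv_apply, relSeries_erase_eq_sum_insert]

theorem ExtendsStirling.relSeries_add_one (hP : ExtendsStirling P) (s : ℚ) (U : Finset ℚ) :
    relSeries P (s + 1) U = relSeries P s U + X * (C (∑ a ∈ U, a + s) * relSeries P s U +
      (relSeries P s ∗ fun Y => ∑ c ∈ Y, C c * relSeries P c (Y.erase c)) U) := by
  have hshift : relSeries P (s + 1) U = relSeries P s U + X * (C s * relSeries P s U +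
      (weightedDeriv C (blockSeries P s) ∗ convInv (blockSeries P 0)) U) := by
    simp only [relSeries, subsetConv, weightedDeriv, hP.blockSeries_add_one, mul_sum,
      ← sum_add_distrib, map_add, map_sum]
    exact sum_congr rfl fun T _ => by ring
  have hderiv : weightedDeriv C (blockSeries P s) ∗ convInv (blockSeries P 0) =
      weightedDeriv C (relSeries P s) +
        relSeries P s ∗ (weightedDeriv C (blockSeries P 0) ∗ convInv (blockSeries P 0)) := by
    rw [← hP.relSeries_subsetConv_blockSeries s, weightedDeriv_subsetConv, add_subsetConv,
      subsetConv_assoc, subsetConv_assoc, subsetConv_convInv hP.blockSeries_zero_empty,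
      subsetConv_unit]
  rw [hshift, hderiv, funext weightedDeriv_blockSeries_subsetConv_apply, Pi.add_apply,
    weightedDeriv, map_add, map_sum]
  ring

end BlockSeries

section Vanishing

variable {P : ℕ → Polynomial ℚ}

theorem exists_polynomial_eval_eq_coeff_relSeries (P : ℕ → Polynomial ℚ) (U : Finset ℚ)
    (w : ℕ) : ∃ Φ : Polynomial ℚ, ∀ s, Φ.eval s = coeff w (relSeries P s U) := by
  refine ⟨∑ T ∈ U.powerset, ∑ p ∈ antidiagonal w,
    (P p.1).comp (Polynomial.X + Polynomial.C (∑ a ∈ T, a)) *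
      Polynomial.C (coeff p.2 (convInv (blockSeries P 0) (U \ T))), fun s => ?_⟩
  simp [relSeries, subsetConv, Polynomial.eval_finsetSum, coeff_mul, blockSeries, add_comm]

theorem X_pow_dvd_relSeries_of_forall_natCast {k : ℕ} {U : Finset ℚ}
    (h : ∀ m : ℕ, X ^ k ∣ relSeries P m U) (s : ℚ) : X ^ k ∣ relSeries P s U := by
  refine X_pow_dvd_iff.2 fun w hw => ?_
  obtain ⟨Φ, hΦ⟩ := exists_polynomial_eval_eq_coeff_relSeries P U w
  have hΦ0 : Φ = 0 := Polynomial.eq_of_eventually_eval_natCast_eq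
    (Filter.Eventually.of_forall fun m => by
      rw [hΦ, X_pow_dvd_iff.1 (h m) w hw, Polynomial.eval_zero])
  rw [← hΦ, hΦ0, Polynomial.eval_zero]

theorem ExtendsStirling.X_pow_card_dvd_relSeries (hP : ExtendsStirling P) (U : Finset ℚ)
    (s : ℚ) : X ^ U.card ∣ relSeries P s U := by
  induction U using Finset.strongInduction generalizing s with
  | H U ih =>
  have hcorr : ∀ Y ⊆ U, X ^ (Y.card - 1) ∣ ∑ c ∈ Y, C c * relSeries P c (Y.erase c) :=
    fun Y hY => dvd_sum fun c hc => by
      rw [← card_erase_of_mem hc]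
      exact dvd_mul_of_dvd_right (ih _ ((erase_ssubset hc).trans_le hY) c) _
  have hconv : ∀ t : ℚ, X ^ (U.card - 1) ∣
      (relSeries P t ∗ fun Y => ∑ c ∈ Y, C c * relSeries P c (Y.erase c)) U :=
    fun t => dvd_sum fun T hT => by
      obtain rfl | hTU := eq_or_ssubset_of_subset (mem_powerset.1 hT)
      · simp
      · have hcard : T.card + ((U \ T).card - 1) = U.card - 1 := by
          have := card_lt_card hTU
          rw [card_sdiff_of_subset hTU.subset]
          omega
        rw [← hcard, pow_add]
        exact mul_dvd_mul (ih T hTU t) (hcorr _ sdiff_subset)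
  refine X_pow_dvd_relSeries_of_forall_natCast (fun m => ?_) s
  induction m with
  | zero =>
    rw [Nat.cast_zero, hP.relSeries_zero, subsetConvUnit]
    split_ifs with hU
    · simp [hU]
    · exact dvd_zero _
  | succ m ihm =>
    rw [Nat.cast_succ, hP.relSeries_add_one]
    refine dvd_add ihm ((pow_dvd_pow X (by omega : U.card ≤ U.card - 1 + 1)).trans ?_)
    rw [pow_succ']
    refine mul_dvd_mul_left X (dvd_add (dvd_mul_of_dvd_right ?_ _) (hconv m))
    exact (pow_dvd_pow X (Nat.sub_le _ 1)).trans ihm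

end Vanishing

namespace WeightedConfig

def equivSigma (S : Finset ℚ) (w : ℕ) :
    WeightedConfig S w ≃ (orderedPartitions S).sigma fun L => weightLists L.length w where
  toFun c := ⟨⟨c.blocks, c.weights⟩, mem_sigma.2
    ⟨mem_orderedPartitions.2 ⟨c.nonempty, c.pairwiseDisjoint, c.union_eq⟩,
      mem_weightLists.2 ⟨c.length_eq, c.weight_sum⟩⟩⟩
  invFun p :=
    have hL := mem_orderedPartitions.1 (mem_sigma.1 p.2).1
    have hws := mem_weightLists.1 (mem_sigma.1 p.2).2
    ⟨p.1.1, p.1.2, hws.1, hL.1, hL.2.1, hL.2.2, hws.2⟩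
  left_inv _ := rfl
  right_inv _ := rfl

theorem finsum_evaluation (P : ℕ → Polynomial ℚ) (S : Finset ℚ) (w : ℕ) :
    ∑ᶠ c : WeightedConfig S w, c.evaluation P =
      coeff w (∑ L ∈ orderedPartitions S,
        ((-1) ^ L.length * (L.length : ℚ)⁻¹) • (L.map (blockSeries P 0)).prod) := by
  rw [← finsum_comp_equiv (equivSigma S w).symm, finsum_eq_sum_of_fintype]
  refine (sum_coe_sort _ fun p : (_ : List (Finset ℚ)) × List ℕ =>
    (-1) ^ p.1.length * (p.1.length : ℚ)⁻¹ *
      ((p.1.zip p.2).map fun bw => (P bw.2).eval (∑ x ∈ bw.1, x)).prod).trans ?_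
  rw [sum_sigma, map_sum]
  refine sum_congr rfl fun L _ => ?_
  rw [coeff_smul, coeff_list_map_prod, smul_eq_mul, mul_sum]
  simp [blockSeries]

end WeightedConfig

theorem chapman_weighted_configurations_general (g : ℕ) (hg : 2 ≤ g) (w : ℕ) (hw : w ≤ g - 2)
    (S : Finset ℚ) (hS : S.card = g)
    (P : ℕ → Polynomial ℚ)
    (hPval : ∀ v : ℕ, ∀ n : ℕ, v ≤ n →
      (P v).eval (n : ℚ) = (ascPochhammer ℚ n).coeff (n - v)) :
    ∑ᶠ c : WeightedConfig S w, c.evaluation P = 0 := by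
  have hP : ExtendsStirling P := hPval
  obtain ⟨c, hc⟩ : S.Nonempty := card_pos.1 (by omega)
  have hw' : w < (S.erase c).card := by
    rw [card_erase_of_mem hc]
    omega
  rw [WeightedConfig.finsum_evaluation, sum_orderedPartitions_inv_length_smul _ hc,
    ← relSeries_erase_eq_sum_insert,
    map_neg, X_pow_dvd_iff.1 (hP.X_pow_card_dvd_relSeries _ c) w hw', neg_zero]

/-- Chapman's theorem: let `g ≥ 2`, let `0 ≤ w ≤ g - 2`, let `S` be a set of `g` distinct
rationals, and for each natural `v` let `P v ∈ ℚ[x]` be the polynomial of degree `2v`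
extending the Stirling number of the first kind `n ↦ [n, n - v]` (for `n ≥ v`).  Then the
sum over all distinct weighted configurations on `S` with total weight `w` of their
evaluations is zero. -/
theorem chapman_weighted_configurations (g : ℕ) (hg : 2 ≤ g) (w : ℕ) (hw : w ≤ g - 2)
    (S : Finset ℚ) (hS : S.card = g)
    (P : ℕ → Polynomial ℚ)
    (hPdeg : ∀ v : ℕ, (P v).degree = (2 * v : ℕ))
    (hPval : ∀ v : ℕ, ∀ n : ℕ, v ≤ n →
      (P v).eval (n : ℚ) = (ascPochhammer ℚ n).coeff (n - v)) :
    ∑ᶠ c : WeightedConfig S w, c.evaluation P = 0 :=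
  chapman_weighted_configurations_general g hg w hw S hS P hPval
end

section
/- Let v and i be natural numbers with 2i ≤ v. The number of i-matchings of the complete graph on v vertices, i.e. the number of sets of i pairwise disjoint edges of the complete graph K_v, equals v! / ((v−2i)! · i! · 2^i). -/
/-!
Write `m_i` for the number of `i`-matchings of `K_n`.
Double count the pairs `(M, e)` of an `(i + 1)`-matching `M` and an edge `e ∈ M`:
deleting `e` leaves an `i`-matching `M'` together with one of the `(n - 2i).choose 2` edges
disjoint from `M'`, and every such pair arises exactly once. Hence
`(i + 1) m_{i+1} = (n - 2i).choose 2 · m_i`, and since `(k.choose 2) · 2 · (k - 2)! = k!`,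
induction on `i` gives `m_i (n - 2i)! i! 2^i = n!`.
-/

open Finset
open scoped Nat

variable {α : Type*} [DecidableEq α]

theorem Finset.card_sym2_filter_not_isDiag (s : Finset α) :
    #{e ∈ s.sym2 | ¬e.IsDiag} = (#s).choose 2 := by
  rw [sym2_eq_image, Sym2.filter_image_mk_not_isDiag, Sym2.card_image_offDiag]

namespace CompleteGraph

variable [Fintype α]

variable (α) in
def matchings (i : ℕ) : Finset (Finset (Sym2 α)) :=
  {M | #M = i ∧ (∀ e ∈ M, ¬e.IsDiag) ∧ ∀ e ∈ M, ∀ f ∈ M, e ≠ f → ∀ a, a ∈ e → a ∉ f}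

theorem mem_matchings {i : ℕ} {M : Finset (Sym2 α)} :
    M ∈ matchings α i ↔
      #M = i ∧ (∀ e ∈ M, ¬e.IsDiag) ∧ ∀ e ∈ M, ∀ f ∈ M, e ≠ f → ∀ a, a ∈ e → a ∉ f := by
  simp [matchings]

theorem coe_matchings (i : ℕ) :
    (matchings α i : Set (Finset (Sym2 α))) =
      {M | #M = i ∧ (∀ e ∈ M, e ∈ (SimpleGraph.completeGraph α).edgeSet) ∧
        ∀ e ∈ M, ∀ f ∈ M, e ≠ f → ∀ a, a ∈ e → a ∉ f} := by
  ext M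
  simp [mem_matchings, SimpleGraph.completeGraph_eq_top, SimpleGraph.edgeSet_top]

theorem card_biUnion_toFinset_of_mem_matchings {i : ℕ} {M : Finset (Sym2 α)}
    (hM : M ∈ matchings α i) : #(M.biUnion Sym2.toFinset) = 2 * i := by
  obtain ⟨rfl, hdiag, hdisj⟩ := mem_matchings.1 hM
  rw [card_biUnion fun e he f hf hef => disjoint_left.2 fun a hae haf =>
      hdisj e he f hf hef a (Sym2.mem_toFinset.1 hae) (Sym2.mem_toFinset.1 haf),
    sum_congr rfl fun e he => Sym2.card_toFinset_of_not_isDiag e (hdiag e he),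
    sum_const, smul_eq_mul, mul_comm]

def freeEdges (M : Finset (Sym2 α)) : Finset (Sym2 α) :=
  {e ∈ (M.biUnion Sym2.toFinset)ᶜ.sym2 | ¬e.IsDiag}

theorem mem_freeEdges {M : Finset (Sym2 α)} {e : Sym2 α} :
    e ∈ freeEdges M ↔ ¬e.IsDiag ∧ ∀ a ∈ e, ∀ f ∈ M, a ∉ f := by
  simp only [freeEdges, mem_filter, mem_sym2_iff, mem_compl, mem_biUnion, Sym2.mem_toFinset,
    not_exists, not_and]
  grind

theorem card_freeEdges {i : ℕ} {M : Finset (Sym2 α)} (hM : M ∈ matchings α i) :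
    #(freeEdges M) = (Fintype.card α - 2 * i).choose 2 := by
  rw [freeEdges, card_sym2_filter_not_isDiag, card_compl,
    card_biUnion_toFinset_of_mem_matchings hM]

theorem notMem_of_mem_freeEdges {M : Finset (Sym2 α)} {e : Sym2 α} (he : e ∈ freeEdges M) :
    e ∉ M := fun heM =>
  (mem_freeEdges.1 he).2 _ (Sym2.out_fst_mem e) e heM (Sym2.out_fst_mem e)

theorem erase_mem_matchings {i : ℕ} {M : Finset (Sym2 α)} (hM : M ∈ matchings α (i + 1))
    {e : Sym2 α} (he : e ∈ M) : M.erase e ∈ matchings α i := by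
  obtain ⟨hcard, hdiag, hdisj⟩ := mem_matchings.1 hM
  refine mem_matchings.2 ⟨by rw [card_erase_of_mem he, hcard, Nat.add_sub_cancel],
    fun f hf => hdiag f (mem_of_mem_erase hf), fun f hf g hg => ?_⟩
  exact hdisj f (mem_of_mem_erase hf) g (mem_of_mem_erase hg)

theorem mem_freeEdges_erase {i : ℕ} {M : Finset (Sym2 α)} (hM : M ∈ matchings α i)
    {e : Sym2 α} (he : e ∈ M) : e ∈ freeEdges (M.erase e) := by
  obtain ⟨-, hdiag, hdisj⟩ := mem_matchings.1 hM
  exact mem_freeEdges.2 ⟨hdiag e he, fun a hae f hf =>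
    hdisj e he f (mem_of_mem_erase hf) (ne_of_mem_erase hf).symm a hae⟩

theorem insert_mem_matchings {i : ℕ} {M : Finset (Sym2 α)} (hM : M ∈ matchings α i)
    {e : Sym2 α} (he : e ∈ freeEdges M) : insert e M ∈ matchings α (i + 1) := by
  obtain ⟨hcard, hdiag, hdisj⟩ := mem_matchings.1 hM
  obtain ⟨he_diag, he_free⟩ := mem_freeEdges.1 he
  refine mem_matchings.2 ⟨by rw [card_insert_of_notMem (notMem_of_mem_freeEdges he), hcard],
    forall_mem_insert _ _ _ |>.2 ⟨he_diag, hdiag⟩, ?_⟩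
  intro f hf g hg hfg a haf hag
  rcases mem_insert.1 hf with rfl | hfM <;> rcases mem_insert.1 hg with rfl | hgM
  · exact hfg rfl
  · exact he_free a haf g hgM hag
  · exact he_free a hag f hfM haf
  · exact hdisj f hfM g hgM hfg a haf hag

theorem card_matchings_succ_mul (i : ℕ) :
    #(matchings α (i + 1)) * (i + 1) =
      #(matchings α i) * (Fintype.card α - 2 * i).choose 2 := by
  have hbij : #((matchings α (i + 1)).sigma fun M => M) = #((matchings α i).sigma freeEdges) := by
    refine card_nbij' (fun p => ⟨p.1.erase p.2, p.2⟩) (fun p => ⟨insert p.2 p.1, p.2⟩)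
      ?_ ?_ ?_ ?_
    · rintro ⟨M, e⟩ hp
      obtain ⟨hM, he⟩ := mem_sigma.1 hp
      exact mem_sigma.2 ⟨erase_mem_matchings hM he, mem_freeEdges_erase hM he⟩
    · rintro ⟨M, e⟩ hp
      obtain ⟨hM, he⟩ := mem_sigma.1 hp
      exact mem_sigma.2 ⟨insert_mem_matchings hM he, mem_insert_self e M⟩
    · rintro ⟨M, e⟩ hp
      rw [mem_coe, mem_sigma] at hp
      simp [insert_erase hp.2]
    · rintro ⟨M, e⟩ hp
      rw [mem_coe, mem_sigma] at hp
      simp [erase_insert (notMem_of_mem_freeEdges hp.2)]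
  rwa [card_sigma, card_sigma, sum_congr rfl fun M hM => (mem_matchings.1 hM).1,
    sum_congr rfl fun M hM => card_freeEdges hM, sum_const, sum_const, smul_eq_mul,
    smul_eq_mul] at hbij

theorem card_matchings_mul {i : ℕ} (hi : 2 * i ≤ Fintype.card α) :
    #(matchings α i) * ((Fintype.card α - 2 * i)! * i ! * 2 ^ i) = (Fintype.card α)! := by
  induction i with
  | zero =>
    have : matchings α 0 = {∅} := by
      ext M
      simp +contextual [mem_matchings]
    simp [this]
  | succ i ih =>
    set m := Fintype.card α - 2 * i
    have hm : Fintype.card α - 2 * (i + 1) = m - 2 := by omega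
    have hm_fact : m.choose 2 * 2 * (m - 2)! = m ! :=
      Nat.choose_mul_factorial_mul_factorial (n := m) (k := 2) (by omega)
    calc #(matchings α (i + 1)) * ((Fintype.card α - 2 * (i + 1))! * (i + 1)! * 2 ^ (i + 1))
        = #(matchings α (i + 1)) * (i + 1) * ((m - 2)! * 2 * i ! * 2 ^ i) := by
          rw [hm, Nat.factorial_succ, pow_succ]; ring
      _ = #(matchings α i) * (m.choose 2 * 2 * (m - 2)! * i ! * 2 ^ i) := by
          rw [card_matchings_succ_mul]; ring
      _ = (Fintype.card α)! := by rw [hm_fact, ih (by omega)]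

end CompleteGraph

/-- The number of `i`-matchings of the complete graph on `v` vertices — i.e. the number of
sets of `i` pairwise disjoint edges of `K_v` — equals `v! / ((v - 2i)! · i! · 2^i)`
whenever `2i ≤ v`. -/
theorem complete_graph_matchings_count (v i : ℕ) (h : 2 * i ≤ v) :
    ({M : Finset (Sym2 (Fin v)) |
        M.card = i ∧
        (∀ e ∈ M, e ∈ (SimpleGraph.completeGraph (Fin v)).edgeSet) ∧
        (∀ e ∈ M, ∀ f ∈ M, e ≠ f → ∀ a : Fin v, a ∈ e → a ∉ f)}.ncard : ℚ) =
      (v.factorial : ℚ) /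
        ((v - 2 * i).factorial * i.factorial * 2 ^ i) := by
  have hcount := CompleteGraph.card_matchings_mul (α := Fin v) (i := i)
    (by rwa [Fintype.card_fin])
  rw [Fintype.card_fin] at hcount
  rw [← CompleteGraph.coe_matchings, Set.ncard_coe_finset, eq_div_iff (by positivity)]
  exact_mod_cast hcount
end

section
/- Fix a positive integer r and an arbitrary sequence of rationals u_2, u_3, .... For each positive integer j, define M_j(n) = [x^j] exp(n·r·x − Σ_{s=2}^{j} (n·u_s/s)·(−x)^s), a polynomial in n of degree j with leading coefficient r^j/j!, and define rationals a_h(r,j) for 0 ≤ h ≤ j by the expansion j!·M_j(n)/(n^j·r^j) = Σ_{h=0}^{j} a_h(r,j)·n^{−h}, so that a_0(r,j) = 1. For each natural number h, let L_h(j) denote the coefficient of t^h in the formal power series logarithm log(1 + Σ_{s=1}^{j} a_s(r,j)·t^s) over ℚ. Then for every h, there exists a polynomial q ∈ ℚ[X] of degree at most h+1 such that L_h(j) = q(j) for all positive integers j; equivalently, the coefficient of j^k in L_h(j) vanishes for all k ≥ h+2. -/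
/-- Formal exponential of a power series over a `ℚ`-algebra: the `k`-th coefficient of
`expPS f` is `∑_{m = 0}^{k} (coeff k (f ^ m)) / m!`.  When the constant term of `f` is zero
(as in all our uses), the terms with `m > k` of the full exponential sum vanish, so this is
the genuine formal power-series exponential `exp f = ∑_{m ≥ 0} f ^ m / m!`. -/
noncomputable def expPS {R : Type*} [CommRing R] [Algebra ℚ R] (f : PowerSeries R) :
    PowerSeries R :=
  PowerSeries.mk fun k => ∑ m ∈ Finset.range (k + 1),
    ((m.factorial : ℚ)⁻¹) • PowerSeries.coeff (R := R) k (f ^ m)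

/-- Formal logarithm `log (1 + g)` for a power series `g` with zero constant term, defined by
`log (1 + z) = ∑_{m ≥ 1} (-1)^(m+1) z^m / m`: the `k`-th coefficient is
`∑_{m = 1}^{k} ((-1)^(m+1) / m) · coeff k (g ^ m)` (terms with `m > k` vanish when the
constant term of `g` is zero). -/
noncomputable def logOnePlus {R : Type*} [CommRing R] [Algebra ℚ R] (g : PowerSeries R) :
    PowerSeries R :=
  PowerSeries.mk fun k => ∑ m ∈ Finset.Icc 1 k,
    (((-1 : ℚ) ^ (m + 1) / (m : ℚ))) • PowerSeries.coeff (R := R) k (g ^ m)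

/-- `Mpoly r u j = [x^j] exp (n·r·x − ∑_{s=2}^{j} (n·u_s/s)·(−x)^s)`, an element of `ℚ[n]`
(the polynomial variable `n` is `Polynomial.X`), computed in the ring of formal power series
in `x` with coefficients in `ℚ[n]`.  It is a polynomial of degree `j` in `n` with leading
coefficient `r^j / j!`. -/
noncomputable def Mpoly (r : ℕ) (u : ℕ → ℚ) (j : ℕ) : Polynomial ℚ :=
  PowerSeries.coeff (R := Polynomial ℚ) j (expPS
    (PowerSeries.C (R := Polynomial ℚ) ((r : ℚ) • Polynomial.X) * PowerSeries.X -
      ∑ s ∈ Finset.Icc 2 j,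
        PowerSeries.C (R := Polynomial ℚ) ((u s / (s : ℚ)) • Polynomial.X) *
          (-PowerSeries.X) ^ s))

/-- The rationals `a_h(r, j)` defined by the expansion
`j! · M_j(n) / (n^j · r^j) = ∑_{h=0}^{j} a_h(r, j) · n^{−h}`; equivalently,
`a_h(r, j) = j! · (coefficient of n^{j−h} in M_j) / r^j` (so `a_0(r, j) = 1`). -/
noncomputable def aCoeff (r : ℕ) (u : ℕ → ℚ) (j h : ℕ) : ℚ :=
  (j.factorial : ℚ) * (Mpoly r u j).coeff (j - h) / (r : ℚ) ^ j

/-- `LCoeff r u h j` is the coefficient of `t^h` in the formal power series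
`log (1 + ∑_{s=1}^{j} a_s(r, j) · t^s)`. -/
noncomputable def LCoeff (r : ℕ) (u : ℕ → ℚ) (h j : ℕ) : ℚ :=
  PowerSeries.coeff (R := ℚ) h (logOnePlus
    (∑ s ∈ Finset.Icc 1 j, PowerSeries.C (R := ℚ) (aCoeff r u j s) * PowerSeries.X ^ s))


/-!
Write `(j)_k = j (j-1) ⋯ (j-k+1)` and `G(x) = g(x/r)`, where `n · g(x)` is the exponent defining
`M_j(n)`. Then `a_s(r, j) = (j)_s [x^j] G^(j-s)`, so `F_j(t) = ∑ a_s(r, j) t^s` is built from the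
powers of one series `G` with `G(0) = 0`, `G'(0) = 1`. Euler's identity
`x (G^(m+1))' - (m+1) G^(m+1) = (m+1) (x G' - G) G^m` turns into the differential equation
`F_j' = ∑_d (d+1) G_(d+2) (j)_(d+2) t^d F_(j-d-2)`. Dividing by `F_j = exp K_j`, `K_j = log F_j`:
`(h+1) [t^(h+1)] K_j = ∑_(d ≤ h) (d+1) G_(d+2) (j)_(d+2) [t^(h-d)] exp (K_(j-d-2) - K_j)`.
By strong induction on `h`, for `e ≤ h` the coefficient `[t^e] (K_(j-d-2) - K_j)` is a
polynomial in `j` of degree `≤ e`, hence `[t^(h-d)] exp (K_(j-d-2) - K_j)` is one of degree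
`≤ h - d`, and the factor `(j)_(d+2)` raises the degree to at most `h + 2`.
-/

open Finset PowerSeries

namespace PowerSeries

section Coefficients

variable {R : Type*} [CommSemiring R]

theorem coeff_pow_eq_zero_of_lt {f : R⟦X⟧}
    (hf : constantCoeff f = 0) {m n : ℕ} (h : n < m) : coeff n (f ^ m) = 0 :=
  coeff_of_lt_order n ((Nat.cast_lt.mpr h).trans_le (le_order_pow_of_constantCoeff_eq_zero m hf))

theorem coeff_pow_eq_of_coeff_eq {f g : R⟦X⟧} {n : ℕ}
    (hfg : ∀ k ≤ n, coeff k f = coeff k g) (m : ℕ) : coeff n (f ^ m) = coeff n (g ^ m) := by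
  have htrunc : trunc (n + 1) f = trunc (n + 1) g := by
    ext k
    simp only [coeff_trunc]
    split_ifs with hk
    · exact hfg k (Nat.lt_succ_iff.mp hk)
    · rfl
  rw [← coeff_coe_trunc_of_lt n.lt_succ_self, ← trunc_trunc_pow, htrunc, trunc_trunc_pow,
    coeff_coe_trunc_of_lt n.lt_succ_self]

theorem coeff_pow_self {f : R⟦X⟧} (hf : constantCoeff f = 0) (m : ℕ) :
    coeff m (f ^ m) = coeff 1 f ^ m := by
  obtain ⟨q, rfl⟩ := X_dvd_iff.mpr hf
  have := coeff_X_pow_mul (q ^ m) m 0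
  rw [zero_add] at this
  rw [mul_pow, this, coeff_zero_eq_constantCoeff, map_pow, coeff_succ_X_mul,
    coeff_zero_eq_constantCoeff]

theorem coeff_X_mul_derivative (f : R⟦X⟧) (j : ℕ) :
    coeff j (X * d⁄dX R f) = j * coeff j f := by
  rcases j with _ | j
  · simp
  · rw [coeff_succ_X_mul, coeff_derivative, mul_comm, Nat.cast_succ]

theorem coeff_sum_range_C_mul_X_pow_mul {a : ℕ → R} {E : ℕ → R⟦X⟧} {n : ℕ}
    (ha : ∀ d, n ≤ d → a d = 0) (h : ℕ) :
    coeff h (∑ d ∈ range n, C (a d) * X ^ d * E d) =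
      ∑ d ∈ range (h + 1), a d * coeff (h - d) (E d) := by
  have hterm : ∀ d, coeff h (C (a d) * X ^ d * E d) =
      a d * if d ≤ h then coeff (h - d) (E d) else 0 := fun d => by
    rw [mul_assoc, coeff_C_mul, coeff_X_pow_mul']
  simp only [map_sum, hterm]
  rw [sum_subset (range_subset_range.mpr (n.le_add_right (h + 1))) fun d _ hd => by
      rw [ha d (by simpa using hd), zero_mul],
    ← sum_subset (range_subset_range.mpr ((h + 1).le_add_left n)) fun d _ hd => by
      rw [if_neg (by simpa using hd), mul_zero]]
  exact sum_congr rfl fun d hd => by rw [if_pos (Nat.lt_succ_iff.mp (mem_range.mp hd))]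

end Coefficients

section RingCoefficients

variable {R : Type*} [CommRing R]

theorem coeff_C_mul_neg_X_pow (a : R) (s k : ℕ) :
    coeff k (C a * (-X) ^ s) = if k = s then a * (-1) ^ s else 0 := by
  rw [neg_pow, mul_left_comm, ← map_one C, ← map_neg C, ← map_pow C, ← mul_assoc,
    ← map_mul, coeff_C_mul_X_pow, mul_comm]

theorem sub_mul_coeff_pow_succ (f : R⟦X⟧) (j m : ℕ) :
    ((j : R) - (m + 1)) * coeff j (f ^ (m + 1)) =
      (m + 1) * coeff j ((X * d⁄dX R f - f) * f ^ m) := by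
  have key : X * d⁄dX R (f ^ (m + 1)) - (m + 1 : R⟦X⟧) * f ^ (m + 1) =
      (m + 1 : R⟦X⟧) * ((X * d⁄dX R f - f) * f ^ m) := by
    rw [derivative_pow, Nat.add_sub_cancel]
    push_cast
    ring
  have := congrArg (coeff j) key
  rw [map_sub, coeff_X_mul_derivative] at this
  have hc : ∀ g : R⟦X⟧, coeff j ((m + 1 : R⟦X⟧) * g) = (m + 1) * coeff j g := fun g => by
    rw [← map_natCast (C (R := R)), ← map_one (C (R := R)), ← map_add, coeff_C_mul]
  rw [hc, hc] at this
  rw [sub_mul, this]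

end RingCoefficients

section ExpLog

variable {R : Type*} [CommRing R] [Algebra ℚ R]

theorem expPS_eq_subst {f : R⟦X⟧} (hf : constantCoeff f = 0) : expPS f = (exp R).subst f := by
  ext k
  rw [expPS, coeff_mk, coeff_subst' (HasSubst.of_constantCoeff_zero' hf),
    finsum_eq_sum_of_support_subset _ (s := range (k + 1)) ?_]
  · refine sum_congr rfl fun m _ => ?_
    rw [coeff_exp, smul_eq_mul, ← Algebra.smul_def, one_div]
  · intro m hm
    rw [Function.mem_support] at hm
    rw [coe_range, Set.mem_Iio, Nat.lt_succ_iff]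
    by_contra! hlt
    exact hm (by rw [coeff_pow_eq_zero_of_lt hf hlt, smul_zero])

theorem logOnePlus_eq_subst {g : R⟦X⟧} (hg : constantCoeff g = 0) :
    logOnePlus g = (log R).subst g := by
  ext k
  rw [logOnePlus, coeff_mk, coeff_subst' (HasSubst.of_constantCoeff_zero' hg),
    finsum_eq_sum_of_support_subset _ (s := Icc 1 k) ?_]
  · refine sum_congr rfl fun m hm => ?_
    rw [coeff_log, if_neg (by rw [mem_Icc] at hm; omega), Algebra.smul_def, smul_eq_mul]
  · intro m hm
    rw [Function.mem_support] at hm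
    rw [coe_Icc, Set.mem_Icc]
    by_contra! hout
    rcases Nat.eq_zero_or_pos m with rfl | hpos
    · exact hm (by rw [coeff_log, if_pos rfl, zero_smul])
    · exact hm (by rw [coeff_pow_eq_zero_of_lt hg (hout hpos), smul_zero])

theorem constantCoeff_expPS (f : R⟦X⟧) : constantCoeff (expPS f) = 1 := by
  rw [← coeff_zero_eq_constantCoeff_apply, expPS, coeff_mk]
  simp

theorem constantCoeff_logOnePlus (g : R⟦X⟧) : constantCoeff (logOnePlus g) = 0 := by
  rw [← coeff_zero_eq_constantCoeff_apply, logOnePlus, coeff_mk]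
  simp

theorem derivative_expPS {f : R⟦X⟧} (hf : constantCoeff f = 0) :
    d⁄dX R (expPS f) = expPS f * d⁄dX R f := by
  rw [expPS_eq_subst hf, derivative_subst (HasSubst.of_constantCoeff_zero' hf), derivative_exp]

theorem derivative_log_mul_one_add_X : d⁄dX R (log R) * (1 + X) = 1 := by
  ext n
  rw [deriv_log, mul_add, mul_one, map_add, coeff_one]
  rcases n with _ | n
  · simp
  · rw [coeff_succ_mul_X, coeff_mk, coeff_mk, if_neg n.succ_ne_zero, pow_succ, mul_neg_one,
      map_neg, neg_add_cancel]

theorem derivative_logOnePlus_mul_one_add {g : R⟦X⟧} (hg : constantCoeff g = 0) :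
    d⁄dX R (logOnePlus g) * (1 + g) = d⁄dX R g := by
  have hsub := HasSubst.of_constantCoeff_zero' hg
  have hinv : (d⁄dX R (log R)).subst g * (1 + g) = 1 := by
    have h := congrArg (substAlgHom (R := R) hsub) (derivative_log_mul_one_add_X (R := R))
    rwa [map_mul, map_add, map_one, coe_substAlgHom, subst_X hsub] at h
  rw [logOnePlus_eq_subst hg, derivative_subst hsub, mul_right_comm, hinv, one_mul]

theorem eq_of_derivative_eq_mul {a y z : R⟦X⟧} (hy : d⁄dX R y = a * y)
    (hz : d⁄dX R z = a * z) (h0 : constantCoeff y = constantCoeff z) : y = z := by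
  ext n
  induction n using Nat.strong_induction_on with
  | _ n ih =>
    rcases n with _ | n
    · simpa using h0
    have hu : IsUnit ((n : R) + 1) := by
      simpa using (isUnit_iff_ne_zero.mpr (Nat.cast_add_one_ne_zero n : (n : ℚ) + 1 ≠ 0)).map
        (algebraMap ℚ R)
    have hsum : coeff n (a * y) = coeff n (a * z) := by
      rw [coeff_mul, coeff_mul]
      refine sum_congr rfl fun p hp => ?_
      rw [ih p.2 (by rw [HasAntidiagonal.mem_antidiagonal] at hp; omega)]
    rw [← hu.mul_left_inj, ← coeff_derivative, ← coeff_derivative, hy, hz, hsum]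

theorem expPS_add {f g : R⟦X⟧} (hf : constantCoeff f = 0) (hg : constantCoeff g = 0) :
    expPS (f + g) = expPS f * expPS g := by
  have hfg : constantCoeff (f + g) = 0 := by rw [map_add, hf, hg, add_zero]
  refine eq_of_derivative_eq_mul (a := d⁄dX R f + d⁄dX R g) ?_ ?_ ?_
  · rw [derivative_expPS hfg, map_add, mul_comm]
  · rw [Derivation.leibniz, derivative_expPS hf, derivative_expPS hg, smul_eq_mul, smul_eq_mul]
    ring
  · rw [constantCoeff_expPS, map_mul, constantCoeff_expPS, constantCoeff_expPS, mul_one]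

theorem expPS_logOnePlus {g : R⟦X⟧} (hg : constantCoeff g = 0) :
    expPS (logOnePlus g) = 1 + g := by
  refine eq_of_derivative_eq_mul (a := d⁄dX R (logOnePlus g)) ?_ ?_ ?_
  · rw [derivative_expPS (constantCoeff_logOnePlus g), mul_comm]
  · rw [map_add, derivative_one, zero_add, derivative_logOnePlus_mul_one_add hg]
  · rw [constantCoeff_expPS, map_add, map_one, hg, add_zero]

end ExpLog

end PowerSeries

section PolynomialFunctions

open Polynomial

variable {R : Type*} [CommRing R]

theorem Polynomial.degree_taylor_sub_le {p : R[X]} {D : ℕ}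
    (hp : p.degree ≤ (D + 1 : ℕ)) (c : R) : (taylor c p - p).degree ≤ D := by
  by_cases hp0 : p = 0
  · simp [hp0]
  refine Order.le_of_lt_succ (lt_of_lt_of_le ?_ hp)
  rw [← degree_taylor p c]
  exact degree_sub_lt_left (degree_taylor p c) (by rwa [Ne, taylor_eq_zero])
    (leadingCoeff_taylor c p)

def IsPolyFrom (N D : ℕ) (f : ℕ → R) : Prop :=
  ∃ p : R[X], p.degree ≤ D ∧ ∀ j, N ≤ j → p.eval (j : R) = f j

namespace IsPolyFrom

variable {N D E : ℕ} {f g : ℕ → R}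

theorem congr (hf : IsPolyFrom N D f) (hfg : ∀ j, N ≤ j → f j = g j) : IsPolyFrom N D g :=
  let ⟨p, hp, hpf⟩ := hf
  ⟨p, hp, fun j hj => (hpf j hj).trans (hfg j hj)⟩

theorem mono (hf : IsPolyFrom N D f) (hDE : D ≤ E) : IsPolyFrom N E f :=
  let ⟨p, hp, hpf⟩ := hf
  ⟨p, hp.trans (by exact_mod_cast hDE), hpf⟩

theorem const (N D : ℕ) (c : R) : IsPolyFrom N D fun _ => c :=
  ⟨C c, degree_C_le.trans (by exact_mod_cast D.zero_le), fun _ _ => eval_C⟩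

theorem add (hf : IsPolyFrom N D f) (hg : IsPolyFrom N D g) :
    IsPolyFrom N D fun j => f j + g j :=
  let ⟨p, hp, hpf⟩ := hf
  let ⟨q, hq, hqg⟩ := hg
  ⟨p + q, (degree_add_le p q).trans (max_le hp hq), fun j hj => by
    rw [eval_add, hpf j hj, hqg j hj]⟩

theorem mul (hf : IsPolyFrom N D f) (hg : IsPolyFrom N E g) :
    IsPolyFrom N (D + E) fun j => f j * g j :=
  let ⟨p, hp, hpf⟩ := hf
  let ⟨q, hq, hqg⟩ := hg
  ⟨p * q, (degree_mul_le p q).trans (by rw [Nat.cast_add]; exact add_le_add hp hq), fun j hj => by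
    rw [eval_mul, hpf j hj, hqg j hj]⟩

theorem const_mul (c : R) (hf : IsPolyFrom N D f) : IsPolyFrom N D fun j => c * f j := by
  simpa using (const N 0 c).mul hf

theorem sum {ι : Type*} (s : Finset ι) {F : ι → ℕ → R}
    (hF : ∀ i ∈ s, IsPolyFrom N D (F i)) :
    IsPolyFrom N D fun j => ∑ i ∈ s, F i j := by
  classical
  induction s using Finset.induction_on with
  | empty => simpa using const N D (0 : R)
  | insert i s hi ih =>
    simp only [Finset.sum_insert hi]
    exact (hF i (s.mem_insert_self i)).add (ih fun i' hi' => hF i' (Finset.mem_insert_of_mem hi'))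

theorem sub_shift (hf : IsPolyFrom 0 (D + 1) f) (k : ℕ) :
    IsPolyFrom k D fun j => f (j - k) - f j :=
  let ⟨p, hp, hpf⟩ := hf
  ⟨taylor (-k : R) p - p, degree_taylor_sub_le hp _, fun j hj => by
    rw [eval_sub, taylor_eval, ← sub_eq_add_neg, ← Nat.cast_sub hj, hpf _ (Nat.zero_le _),
      hpf _ (Nat.zero_le _)]⟩

theorem descFactorial_mul [IsDomain R] {k : ℕ} (hf : IsPolyFrom k D f) :
    IsPolyFrom 0 (k + D) fun j => (j.descFactorial k : R) * f j :=
  let ⟨p, hp, hpf⟩ := hf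
  ⟨descPochhammer R k * p, (degree_mul_le _ _).trans (by
      rw [Nat.cast_add]
      exact add_le_add (degree_le_of_natDegree_le (descPochhammer_natDegree R k).le) hp),
    fun j _ => by
      rw [eval_mul, descPochhammer_eval_eq_descFactorial]
      rcases lt_or_ge j k with hjk | hkj
      · simp [Nat.descFactorial_eq_zero_iff_lt.mpr hjk]
      · rw [hpf j hkj]⟩

section PowerSeriesFamily

variable {Δ : ℕ → PowerSeries R} {n : ℕ}

theorem coeff_pow (hΔ : ∀ e ≤ n, IsPolyFrom N e fun j => PowerSeries.coeff e (Δ j)) (m : ℕ)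
    {k : ℕ} (hk : k ≤ n) : IsPolyFrom N k fun j => PowerSeries.coeff k (Δ j ^ m) := by
  induction m generalizing k with
  | zero => simpa [PowerSeries.coeff_one] using const N k (if k = 0 then (1 : R) else 0)
  | succ m ih =>
    simp only [pow_succ', PowerSeries.coeff_mul]
    refine sum _ fun p hp => ?_
    rw [Finset.HasAntidiagonal.mem_antidiagonal] at hp
    exact ((hΔ p.1 (by omega)).mul (ih (by omega))).mono hp.le

theorem coeff_expPS [Algebra ℚ R]
    (hΔ : ∀ e ≤ n, IsPolyFrom N e fun j => PowerSeries.coeff e (Δ j)) {k : ℕ}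
    (hk : k ≤ n) :
    IsPolyFrom N k fun j => PowerSeries.coeff k (expPS (Δ j)) := by
  simp only [expPS, PowerSeries.coeff_mk, Algebra.smul_def]
  exact sum _ fun m _ => (coeff_pow hΔ m hk).const_mul _

end PowerSeriesFamily

end IsPolyFrom

end PolynomialFunctions

section NormalizedSeries

variable (G : ℚ⟦X⟧)

/-- `j! t^j [x^j] exp (G(x) / t)`; for `G(x) = g(x/r)` its coefficients are the `a_s(r, j)`. -/
noncomputable def normalizedSeries (j : ℕ) : ℚ⟦X⟧ :=
  mk fun s => (j.descFactorial s : ℚ) * coeff j (G ^ (j - s))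

noncomputable def logNormalizedSeries (j : ℕ) : ℚ⟦X⟧ :=
  logOnePlus (normalizedSeries G j - 1)

variable {G}

theorem coeff_X_mul_derivative_sub_mul_pow (hG : constantCoeff G = 0) (h m : ℕ) :
    coeff (h + 2 + m) ((X * d⁄dX ℚ G - G) * G ^ m) =
      ∑ d ∈ range (h + 1), (d + 1) * coeff (d + 2) G * coeff (h - d + m) (G ^ m) := by
  have hH : ∀ i, coeff i (X * d⁄dX ℚ G - G) = ((i : ℚ) - 1) * coeff i G := fun i => by
    rw [map_sub, coeff_X_mul_derivative]
    ring
  set φ : ℕ → ℚ := fun i => coeff i (X * d⁄dX ℚ G - G) * coeff (h + 2 + m - i) (G ^ m)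
  have hG' : coeff 0 G = 0 := by rwa [coeff_zero_eq_constantCoeff_apply]
  rw [coeff_mul, Finset.Nat.sum_antidiagonal_eq_sum_range_succ (fun i k => coeff i _ * coeff k _),
    show (h + 2 + m).succ = (h + 1 + m) + 1 + 1 by omega, sum_range_succ' φ,
    sum_range_succ' (fun i => φ (i + 1)), sum_range_add]
  have hφ0 : φ 0 = 0 := by simp [φ, hH, hG']
  have hφ1 : φ 1 = 0 := by simp [φ, hH]
  have htail : ∀ d ∈ range m, φ (h + 1 + d + 1 + 1) = 0 := fun d hd => by
    simp only [φ]
    rw [coeff_pow_eq_zero_of_lt hG (by rw [mem_range] at hd; omega), mul_zero]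
  rw [sum_eq_zero htail, hφ0, hφ1, add_zero, add_zero, add_zero]
  refine sum_congr rfl fun d hd => ?_
  rw [mem_range] at hd
  simp only [φ, hH, show h + 2 + m - (d + 1 + 1) = h - d + m by omega]
  push_cast
  ring

theorem coeff_succ_normalizedSeries (hG : constantCoeff G = 0) (j h : ℕ) :
    ((h : ℚ) + 1) * coeff (h + 1) (normalizedSeries G j) =
      ∑ d ∈ range (h + 1), (d + 1) * coeff (d + 2) G * (j.descFactorial (d + 2) : ℚ) *
        coeff (h - d) (normalizedSeries G (j - (d + 2))) := by
  have hterm : ∀ d ∈ range (h + 1),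
      (d + 1) * coeff (d + 2) G * (j.descFactorial (d + 2) : ℚ) *
        ((j - (d + 2)).descFactorial (h - d) * coeff (j - (d + 2)) (G ^ (j - (d + 2) - (h - d)))) =
      j.descFactorial (h + 2) *
        ((d + 1) * coeff (d + 2) G * coeff (j - (d + 2)) (G ^ (j - (h + 2))))
      := fun d hd => by
    rw [mem_range] at hd
    rw [← Nat.descFactorial_mul_descFactorial (show d + 2 ≤ h + 2 by omega),
      show h + 2 - (d + 2) = h - d by omega, show j - (d + 2) - (h - d) = j - (h + 2) by omega]
    push_cast
    ring
  simp only [normalizedSeries, coeff_mk]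
  rw [sum_congr rfl hterm, ← mul_sum]
  rcases lt_or_ge j (h + 2) with hj | hj
  · rcases (Nat.lt_succ_iff.mp hj).lt_or_eq with hj | rfl
    · rw [Nat.descFactorial_eq_zero_iff_lt.mpr hj,
        Nat.descFactorial_eq_zero_iff_lt.mpr (show j < h + 2 by omega)]
      simp
    · simp [coeff_one]
  · obtain ⟨m, rfl⟩ := Nat.exists_eq_add_of_le hj
    have hsum := coeff_X_mul_derivative_sub_mul_pow hG h m
    have heuler := sub_mul_coeff_pow_succ G (h + 2 + m) m
    have hdesc : (h + 2 + m).descFactorial (h + 2) =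
        (m + 1) * (h + 2 + m).descFactorial (h + 1) := by
      rw [Nat.descFactorial_succ, show h + 2 + m - (h + 1) = m + 1 by omega]
    rw [show h + 2 + m - (h + 1) = m + 1 by omega, show h + 2 + m - (h + 2) = m by omega, hdesc,
      sum_congr rfl fun d hd => by
        rw [show h + 2 + m - (d + 2) = h - d + m by rw [mem_range] at hd; omega],
      ← hsum]
    push_cast at heuler ⊢
    linear_combination ((h + 2 + m).descFactorial (h + 1) : ℚ) * heuler

theorem derivative_normalizedSeries (hG : constantCoeff G = 0) (j : ℕ) :
    d⁄dX ℚ (normalizedSeries G j) = ∑ d ∈ range j,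
      C ((d + 1) * coeff (d + 2) G * j.descFactorial (d + 2)) * X ^ d *
        normalizedSeries G (j - (d + 2)) := by
  ext h
  rw [coeff_derivative, coeff_sum_range_C_mul_X_pow_mul fun d hd => by
      rw [Nat.descFactorial_eq_zero_iff_lt.mpr (by omega), Nat.cast_zero, mul_zero],
    mul_comm, coeff_succ_normalizedSeries hG]

theorem constantCoeff_normalizedSeries (hG : constantCoeff G = 0) (hG₁ : coeff 1 G = 1)
    (j : ℕ) :
    constantCoeff (normalizedSeries G j) = 1 := by
  rw [← coeff_zero_eq_constantCoeff_apply, normalizedSeries, coeff_mk, Nat.descFactorial_zero,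
    Nat.sub_zero, coeff_pow_self hG, hG₁, one_pow, Nat.cast_one, one_mul]

theorem constantCoeff_normalizedSeries_sub_one (hG : constantCoeff G = 0) (hG₁ : coeff 1 G = 1)
    (j : ℕ) :
    constantCoeff (normalizedSeries G j - 1) = 0 := by
  rw [map_sub, constantCoeff_normalizedSeries hG hG₁, map_one, sub_self]

theorem expPS_logNormalizedSeries (hG : constantCoeff G = 0) (hG₁ : coeff 1 G = 1)
    (j : ℕ) :
    expPS (logNormalizedSeries G j) = normalizedSeries G j := by
  rw [logNormalizedSeries, expPS_logOnePlus (constantCoeff_normalizedSeries_sub_one hG hG₁ j),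
    add_sub_cancel]

theorem expPS_sub_logNormalizedSeries_mul (hG : constantCoeff G = 0) (hG₁ : coeff 1 G = 1)
    (a j : ℕ) :
    expPS (logNormalizedSeries G a - logNormalizedSeries G j) * normalizedSeries G j =
      normalizedSeries G a := by
  rw [← expPS_logNormalizedSeries hG hG₁ j, ← expPS_add, sub_add_cancel,
    expPS_logNormalizedSeries hG hG₁]
  · rw [map_sub, logNormalizedSeries, logNormalizedSeries, constantCoeff_logOnePlus,
      constantCoeff_logOnePlus, sub_zero]
  · exact constantCoeff_logOnePlus _

theorem derivative_logNormalizedSeries (hG : constantCoeff G = 0) (hG₁ : coeff 1 G = 1)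
    (j : ℕ) :
    d⁄dX ℚ (logNormalizedSeries G j) = ∑ d ∈ range j,
      C ((d + 1) * coeff (d + 2) G * j.descFactorial (d + 2)) * X ^ d *
        expPS (logNormalizedSeries G (j - (d + 2)) - logNormalizedSeries G j) := by
  have hunit : IsUnit (normalizedSeries G j) :=
    isUnit_iff_constantCoeff.mpr (by rw [constantCoeff_normalizedSeries hG hG₁]; exact isUnit_one)
  rw [← hunit.mul_left_inj, sum_mul]
  simp only [mul_assoc, expPS_sub_logNormalizedSeries_mul hG hG₁]
  have := derivative_logOnePlus_mul_one_add (constantCoeff_normalizedSeries_sub_one hG hG₁ j)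
  rw [add_sub_cancel, map_sub, derivative_one, sub_zero] at this
  rw [logNormalizedSeries, this, derivative_normalizedSeries hG]
  simp only [mul_assoc]

theorem coeff_succ_logNormalizedSeries (hG : constantCoeff G = 0) (hG₁ : coeff 1 G = 1)
    (j h : ℕ) :
    ((h : ℚ) + 1) * coeff (h + 1) (logNormalizedSeries G j) = ∑ d ∈ range (h + 1),
      (d + 1) * coeff (d + 2) G * j.descFactorial (d + 2) *
        coeff (h - d) (expPS (logNormalizedSeries G (j - (d + 2)) - logNormalizedSeries G j)) := by
  rw [mul_comm, ← coeff_derivative, derivative_logNormalizedSeries hG hG₁,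
    coeff_sum_range_C_mul_X_pow_mul fun d hd => by
      rw [Nat.descFactorial_eq_zero_iff_lt.mpr (by omega), Nat.cast_zero, mul_zero]]

theorem isPolyFrom_coeff_logNormalizedSeries (hG : constantCoeff G = 0) (hG₁ : coeff 1 G = 1)
    (h : ℕ) : IsPolyFrom 0 (h + 1) fun j => coeff h (logNormalizedSeries G j) := by
  induction h using Nat.strong_induction_on with
  | _ h ih =>
    rcases h with _ | h
    · simpa [logNormalizedSeries, constantCoeff_logOnePlus] using IsPolyFrom.const 0 1 (0 : ℚ)
    have hterm : ∀ d ∈ range (h + 1), IsPolyFrom 0 (h + 2) fun j =>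
        (d + 1) * coeff (d + 2) G * j.descFactorial (d + 2) * coeff (h - d)
          (expPS (logNormalizedSeries G (j - (d + 2)) - logNormalizedSeries G j)) := by
      intro d hd
      rw [mem_range] at hd
      have hΔ : ∀ e ≤ h - d, IsPolyFrom (d + 2) e fun j =>
          coeff e (logNormalizedSeries G (j - (d + 2)) - logNormalizedSeries G j) := fun e he => by
        simpa only [map_sub] using (ih e (by omega)).sub_shift (d + 2)
      have := ((IsPolyFrom.coeff_expPS hΔ le_rfl).descFactorial_mul).const_mul
        (((d : ℚ) + 1) * coeff (d + 2) G)
      rw [show d + 2 + (h - d) = h + 2 by omega] at this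
      simpa only [mul_assoc] using this
    refine ((IsPolyFrom.sum _ hterm).const_mul ((h : ℚ) + 1)⁻¹).congr fun j _ => ?_
    rw [← coeff_succ_logNormalizedSeries hG hG₁, inv_mul_cancel_left₀ (by positivity)]

end NormalizedSeries

section Specialization

/-- The exponent of `M_j(n)` divided by `n`, with its sum extended to all `s ≥ 2`: the terms with
`s > j` do not affect `[x^j]`. -/
noncomputable def exponentSeries (r : ℕ) (u : ℕ → ℚ) : ℚ⟦X⟧ :=
  C (r : ℚ) * X - PowerSeries.mk fun s => if 2 ≤ s then u s / s * (-1) ^ s else 0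

variable (r : ℕ) (u : ℕ → ℚ)

theorem coeff_exponentSeries_of_le {j k : ℕ} (hk : k ≤ j) :
    coeff k (C (r : ℚ) * X - ∑ s ∈ Icc 2 j, C (u s / s) * (-X) ^ s) =
      coeff k (exponentSeries r u) := by
  rw [exponentSeries, map_sub, map_sub, map_sum, coeff_mk]
  simp only [coeff_C_mul_neg_X_pow, sum_ite_eq, mem_Icc, hk, and_true]

theorem Mpoly_eq_sum (j : ℕ) : Mpoly r u j = ∑ m ∈ range (j + 1),
    ((m.factorial : ℚ)⁻¹ * coeff j (exponentSeries r u ^ m)) • Polynomial.X ^ m := by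
  set g : ℚ⟦X⟧ := C (r : ℚ) * X - ∑ s ∈ Icc 2 j, C (u s / s) * (-X) ^ s
  have harg : C ((r : ℚ) • Polynomial.X) * X - ∑ s ∈ Icc 2 j,
      C ((u s / (s : ℚ)) • Polynomial.X) * (-X) ^ s =
      C Polynomial.X * PowerSeries.map Polynomial.C g := by
    have hterm : ∀ (a : ℚ) (f : ℚ⟦X⟧),
        C Polynomial.X * PowerSeries.map Polynomial.C (C a * f) =
          C (a • Polynomial.X) * PowerSeries.map Polynomial.C f := fun a f => by
      rw [map_mul, map_C, ← mul_assoc, ← map_mul, Polynomial.smul_eq_C_mul,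
        mul_comm Polynomial.X]
    rw [map_sub, map_sum, mul_sub, mul_sum, hterm, map_X]
    refine congrArg _ (sum_congr rfl fun s _ => ?_)
    rw [hterm, map_pow, map_neg, map_X]
  have hcoeff : ∀ k ≤ j, coeff k (C Polynomial.X * PowerSeries.map Polynomial.C g) =
      coeff k (C Polynomial.X * PowerSeries.map Polynomial.C (exponentSeries r u)) := fun k hk => by
    rw [coeff_C_mul, coeff_C_mul, coeff_map, coeff_map, coeff_exponentSeries_of_le r u hk]
  rw [Mpoly, harg, expPS, coeff_mk]
  refine sum_congr rfl fun m _ => ?_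
  rw [coeff_pow_eq_of_coeff_eq hcoeff, mul_pow, ← map_pow, ← map_pow, coeff_C_mul, coeff_map,
    mul_smul, Polynomial.smul_eq_C_mul (coeff j _), mul_comm]

theorem coeff_Mpoly {j s : ℕ} (hs : s ≤ j) :
    (Mpoly r u j).coeff (j - s) =
      ((j - s).factorial : ℚ)⁻¹ * coeff j (exponentSeries r u ^ (j - s)) := by
  simp only [Mpoly_eq_sum, Polynomial.finsetSum_coeff, Polynomial.coeff_smul,
    Polynomial.coeff_X_pow, smul_eq_mul, mul_ite, mul_one, mul_zero, sum_ite_eq, mem_range]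
  rw [if_pos (by omega)]

theorem aCoeff_eq_coeff_normalizedSeries (hr : 0 < r) {j s : ℕ} (hs : s ≤ j) :
    aCoeff r u j s =
      coeff s (normalizedSeries (rescale (r : ℚ)⁻¹ (exponentSeries r u)) j) := by
  have hfac := Nat.factorial_mul_descFactorial hs
  have hr' : (r : ℚ) ≠ 0 := by positivity
  have hfac' : ((j - s).factorial : ℚ) ≠ 0 := by positivity
  rw [aCoeff, coeff_Mpoly r u hs, normalizedSeries, coeff_mk, ← map_pow, coeff_rescale,
    ← hfac, inv_pow]
  push_cast
  field_simp

theorem constantCoeff_rescale_exponentSeries (c : ℚ) :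
    constantCoeff (rescale c (exponentSeries r u)) = 0 := by
  rw [← coeff_zero_eq_constantCoeff_apply, coeff_rescale, exponentSeries]
  simp

theorem coeff_one_rescale_exponentSeries (hr : 0 < r) :
    coeff 1 (rescale (r : ℚ)⁻¹ (exponentSeries r u)) = 1 := by
  rw [coeff_rescale, exponentSeries, map_sub, coeff_C_mul, coeff_X, coeff_mk]
  simp [(show (r : ℚ) ≠ 0 by positivity)]

theorem sum_aCoeff_eq_normalizedSeries_sub_one (hr : 0 < r) (j : ℕ) :
    ∑ s ∈ Icc 1 j, C (aCoeff r u j s) * X ^ s =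
      normalizedSeries (rescale (r : ℚ)⁻¹ (exponentSeries r u)) j - 1 := by
  ext k
  simp only [map_sum, coeff_C_mul_X_pow, sum_ite_eq, mem_Icc, map_sub, coeff_one]
  rcases Nat.eq_zero_or_pos k with rfl | hk
  · rw [coeff_zero_eq_constantCoeff_apply, constantCoeff_normalizedSeries
      (constantCoeff_rescale_exponentSeries r u _) (coeff_one_rescale_exponentSeries r u hr)]
    simp
  rw [if_neg hk.ne']
  split_ifs with hkj
  · rw [aCoeff_eq_coeff_normalizedSeries r u hr hkj.2, sub_zero]
  · rw [normalizedSeries, coeff_mk, Nat.descFactorial_eq_zero_iff_lt.mpr (by omega)]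
    simp

theorem LCoeff_eq_coeff_logNormalizedSeries (hr : 0 < r) (h j : ℕ) :
    LCoeff r u h j =
      coeff h (logNormalizedSeries (rescale (r : ℚ)⁻¹ (exponentSeries r u)) j) := by
  rw [LCoeff, sum_aCoeff_eq_normalizedSeries_sub_one r u hr, logNormalizedSeries]

end Specialization

/-- For a fixed positive integer `r` and an arbitrary sequence of rationals `u`: for every
`h`, the coefficient `L_h(j)` of `t^h` in `log (1 + ∑_{s=1}^{j} a_s(r, j) t^s)` is given, for
all positive integers `j`, by a polynomial in `j` of degree at most `h + 1`; equivalently,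
the coefficient of `j^k` in `L_h(j)` vanishes for all `k ≥ h + 2`. -/
theorem logCoeff_polynomial_of_degree_le (r : ℕ) (hr : 0 < r) (u : ℕ → ℚ) (h : ℕ) :
    ∃ q : Polynomial ℚ, q.degree ≤ (h + 1 : ℕ) ∧
      ∀ j : ℕ, 0 < j → q.eval (j : ℚ) = LCoeff r u h j := by
  obtain ⟨q, hq, hqL⟩ := isPolyFrom_coeff_logNormalizedSeries
    (constantCoeff_rescale_exponentSeries r u _) (coeff_one_rescale_exponentSeries r u hr) h
  exact ⟨q, hq, fun j _ => by rw [hqL j j.zero_le, LCoeff_eq_coeff_logNormalizedSeries r u hr]⟩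
end
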